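/- arXiv:2205.07146 — 8 statements merged into one kernel-verified Lean document; each statement's English description precedes it below -/
import Mathlib

section
/- Let ν ∈ P(X), τ > 0, c : X×X → ℝ continuous, and ψ : X → ℝ bounded measurable. Define φ(x) := −τ log ∫_X exp((ψ(y) − c(x,y))/τ) dν(y) for x ∈ X. Then the oscillation of φ is bounded by that of c: sup_{x∈X} φ(x) − inf_{x∈X} φ(x) ≤ sup_{(x,y)∈X×X} c(x,y) − inf_{(x,y)∈X×X} c(x,y). -/
/-!
For `x, x' ∈ X` and `ν`-a.e. `y` (so `y ∈ X`), the integrands defining `φ x'` and `φ x` differ by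
the factor `exp ((c (x, y) - c (x', y)) / τ) ≤ exp (osc c / τ)`. Integrating and taking `-τ log`
gives `φ x ≤ φ x' + osc c` for all `x, x' ∈ X`, which bounds the oscillation of `φ`.
-/

open MeasureTheory Real Set

abbrev Pt (d : ℕ) := EuclideanSpace ℝ (Fin d)

theorem sSup_image_sub_sInf_image_le {α : Type*} {f : α → ℝ} {s : Set α} {a : ℝ}
    (hs : s.Nonempty) (h : ∀ x ∈ s, ∀ x' ∈ s, f x ≤ f x' + a) :
    sSup (f '' s) - sInf (f '' s) ≤ a := by
  have hne : (f '' s).Nonempty := hs.image f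
  suffices sSup (f '' s) ≤ sInf (f '' s) + a by linarith
  refine csSup_le hne ?_
  rintro _ ⟨x, hx, rfl⟩
  suffices f x - a ≤ sInf (f '' s) by linarith
  refine le_csInf hne ?_
  rintro _ ⟨x', hx', rfl⟩
  linarith [h x hx x' hx']

theorem sub_le_sSup_sub_sInf_of_isCompact {S : Set ℝ} (hS : IsCompact S) {a b : ℝ}
    (ha : a ∈ S) (hb : b ∈ S) : a - b ≤ sSup S - sInf S := by
  linarith [le_csSup hS.bddAbove ha, csInf_le hS.bddBelow hb]

section ExpIntegrals

variable {Ω : Type*} [MeasurableSpace Ω] {μ : Measure Ω}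

theorem integrable_exp_of_ae_le [IsFiniteMeasure μ] {f : Ω → ℝ} {M : ℝ}
    (hf : AEStronglyMeasurable f μ) (hM : ∀ᵐ y ∂μ, f y ≤ M) :
    Integrable (fun y => exp (f y)) μ := by
  refine (integrable_const (exp M)).mono' (continuous_exp.comp_aestronglyMeasurable hf) ?_
  filter_upwards [hM] with y hy
  rw [norm_of_nonneg (exp_pos _).le]
  exact exp_le_exp.2 hy

theorem log_integral_exp_le_of_ae_le [NeZero μ] {f g : Ω → ℝ} {a : ℝ}
    (hf : Integrable (fun y => exp (f y)) μ) (hg : Integrable (fun y => exp (g y)) μ)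
    (hgf : ∀ᵐ y ∂μ, g y ≤ f y + a) :
    log (∫ y, exp (g y) ∂μ) ≤ log (∫ y, exp (f y) ∂μ) + a := by
  have hint : ∫ y, exp (g y) ∂μ ≤ exp a * ∫ y, exp (f y) ∂μ := by
    rw [← integral_const_mul]
    refine integral_mono_ae hg (hf.const_mul _) ?_
    filter_upwards [hgf] with y hy
    rw [← exp_add, add_comm a]
    exact exp_le_exp.2 hy
  calc log (∫ y, exp (g y) ∂μ) ≤ log (exp a * ∫ y, exp (f y) ∂μ) :=
        log_le_log (integral_exp_pos hg) hint
    _ = log (∫ y, exp (f y) ∂μ) + a := by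
        rw [log_mul (exp_pos a).ne' (integral_exp_pos hf).ne', log_exp, add_comm]

end ExpIntegrals

/-- the oscillation of the Schrödinger-type potential
`φ(x) = -τ log ∫ exp((ψ(y) - c(x,y))/τ) dν(y)` over `X` is bounded by the oscillation
of the cost `c` over `X × X`. -/
theorem stmt_1 {d : ℕ} (X : Set (Pt d)) (hXc : IsCompact X) (hXne : X.Nonempty)
    (ν : Measure (Pt d)) [IsProbabilityMeasure ν] (hνX : ν Xᶜ = 0)
    (τ : ℝ) (hτ : 0 < τ)
    (c : Pt d × Pt d → ℝ) (hc : Continuous c)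
    (ψ : Pt d → ℝ) (hψm : Measurable ψ) (hψb : ∃ M : ℝ, ∀ y, |ψ y| ≤ M)
    (φ : Pt d → ℝ)
    (hφ : ∀ x, φ x = -τ * Real.log (∫ y, Real.exp ((ψ y - c (x, y)) / τ) ∂ν)) :
    sSup (φ '' X) - sInf (φ '' X) ≤ sSup (c '' (X ×ˢ X)) - sInf (c '' (X ×ˢ X)) := by
  obtain ⟨M, hM⟩ := hψb
  set C := c '' (X ×ˢ X)
  have hC : IsCompact C := (hXc.prod hXc).image hc
  have hae : ∀ᵐ y ∂ν, y ∈ X := ae_iff.2 hνX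
  have hint : ∀ x ∈ X, Integrable (fun y => exp ((ψ y - c (x, y)) / τ)) ν := fun x hx =>
    integrable_exp_of_ae_le (M := (M - sInf C) / τ) (by fun_prop) <| by
      filter_upwards [hae] with y hy
      have := csInf_le hC.bddBelow (mem_image_of_mem c (mk_mem_prod hx hy))
      gcongr
      linarith [(abs_le.1 (hM y)).2]
  refine sSup_image_sub_sInf_image_le hXne fun x hx x' hx' => ?_
  have hlog := log_integral_exp_le_of_ae_le (a := (sSup C - sInf C) / τ) (hint x hx) (hint x' hx') <| by
    filter_upwards [hae] with y hy
    rw [← add_div]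
    gcongr
    linarith [sub_le_sSup_sub_sInf_of_isCompact hC (mem_image_of_mem c (mk_mem_prod hx hy))
      (mem_image_of_mem c (mk_mem_prod hx' hy))]
  rw [hφ, hφ]
  have := mul_le_mul_of_nonneg_left hlog hτ.le
  rw [mul_add, mul_div_cancel₀ _ hτ.ne'] at this
  linarith
end

section
/- Let c : ℝ^d × ℝ^d → ℝ be continuously differentiable, let ν ∈ P(X), τ > 0, and ψ : X → ℝ bounded measurable. Define φ(x) := −τ log ∫_X exp((ψ(y) − c(x,y))/τ) dν(y) for x ∈ ℝ^d. Then φ is differentiable at every x ∈ ℝ^d, with gradient given by the conditional-expectation formula ∇φ(x) = ( ∫_X ∇_x c(x,y) · exp((ψ(y) − c(x,y))/τ) dν(y) ) / ( ∫_X exp((ψ(y) − c(x,y))/τ) dν(y) ), where ∇_x c denotes the gradient of c with respect to its first argument. -/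
/-!
Write `φ = -τ log ∫ exp (f x y) dν(y)` with `f x y = (ψ y - c (x, y)) / τ`. On the compact set
`closedBall x 1 ×ˢ X`, which carries `ν`, both `c` and its partial derivative in the first variable
are bounded, so `exp ∘ f` and its derivative in `x` are dominated by constants and we may
differentiate under the integral sign. The integral of an exponential is positive, and the chain
rule for `log` gives the derivative; the Riesz isomorphism `toDual`, being a linear isometry, commutes
with the integral and turns it into the stated gradient.
-/

open MeasureTheory Real Set

open Filter Topology

section PartialDerivative

variable {E F G : Type*} [NormedAddCommGroup E] [NormedSpace ℝ E] [NormedAddCommGroup F]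
  [NormedSpace ℝ F] [NormedAddCommGroup G] [NormedSpace ℝ G] {c : E × F → G}

theorem fderiv_comp_prodMk_left {x : E} {y : F} (hc : DifferentiableAt ℝ c (x, y)) :
    fderiv ℝ (fun z => c (z, y)) x = (fderiv ℝ c (x, y)).comp (ContinuousLinearMap.inl ℝ E F) :=
  (hc.hasFDerivAt.comp x (hasFDerivAt_prodMk_left x y)).fderiv

theorem ContDiff.continuous_fderiv_comp_prodMk_left (hc : ContDiff ℝ 1 c) :
    Continuous fun p : E × F => fderiv ℝ (fun z => c (z, p.2)) p.1 := by
  have hdiff := hc.differentiable one_ne_zero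
  simp_rw [fun p : E × F => fderiv_comp_prodMk_left (hdiff (p.1, p.2))]
  exact (hc.continuous_fderiv one_ne_zero).clm_comp continuous_const

end PartialDerivative

section LogIntegralExp

variable {α E : Type*} [MeasurableSpace α] {μ : Measure α} [IsFiniteMeasure μ]
  [NormedAddCommGroup E] [NormedSpace ℝ E] {f : E → α → ℝ} {f' : E → α → E →L[ℝ] ℝ}
  {s : Set E} {x : E} {A B : ℝ}

theorem integrable_exp_of_ae_le_s2 {g : α → ℝ} (hg : AEStronglyMeasurable g μ)
    (hle : ∀ᵐ y ∂μ, g y ≤ A) : Integrable (fun y => exp (g y)) μ := by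
  refine (integrable_const (exp A)).mono' (continuous_exp.comp_aestronglyMeasurable hg) ?_
  filter_upwards [hle] with y hy
  rw [norm_of_nonneg (exp_pos _).le]
  exact exp_le_exp.2 hy

theorem hasFDerivAt_integral_exp (hs : s ∈ 𝓝 x)
    (hf_meas : ∀ᶠ x' in 𝓝 x, AEStronglyMeasurable (f x') μ)
    (hf'_meas : AEStronglyMeasurable (f' x) μ)
    (hf_le : ∀ᵐ y ∂μ, ∀ x' ∈ s, f x' y ≤ A) (hf'_le : ∀ᵐ y ∂μ, ∀ x' ∈ s, ‖f' x' y‖ ≤ B)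
    (hf' : ∀ᵐ y ∂μ, ∀ x' ∈ s, HasFDerivAt (f · y) (f' x' y) x') :
    HasFDerivAt (fun x => ∫ y, exp (f x y) ∂μ) (∫ y, exp (f x y) • f' x y ∂μ) x := by
  have hx : x ∈ s := mem_of_mem_nhds hs
  refine hasFDerivAt_integral_of_dominated_of_fderiv_le (bound := fun _ => exp A * B) hs
    (hf_meas.mono fun x' h => continuous_exp.comp_aestronglyMeasurable h)
    (integrable_exp_of_ae_le_s2 hf_meas.self_of_nhds (hf_le.mono fun y h => h x hx))
    ((continuous_exp.comp_aestronglyMeasurable hf_meas.self_of_nhds).smul hf'_meas)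
    ?_ (integrable_const _) (hf'.mono fun y h x' hx' => (h x' hx').exp)
  filter_upwards [hf_le, hf'_le] with y hfy hf'y x' hx'
  rw [norm_smul, norm_of_nonneg (exp_pos _).le]
  exact mul_le_mul (exp_le_exp.2 (hfy x' hx')) (hf'y x' hx') (norm_nonneg _) (exp_pos _).le

theorem hasFDerivAt_log_integral_exp [NeZero μ] (hs : s ∈ 𝓝 x)
    (hf_meas : ∀ᶠ x' in 𝓝 x, AEStronglyMeasurable (f x') μ)
    (hf'_meas : AEStronglyMeasurable (f' x) μ)
    (hf_le : ∀ᵐ y ∂μ, ∀ x' ∈ s, f x' y ≤ A) (hf'_le : ∀ᵐ y ∂μ, ∀ x' ∈ s, ‖f' x' y‖ ≤ B)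
    (hf' : ∀ᵐ y ∂μ, ∀ x' ∈ s, HasFDerivAt (f · y) (f' x' y) x') :
    HasFDerivAt (fun x => log (∫ y, exp (f x y) ∂μ))
      ((∫ y, exp (f x y) ∂μ)⁻¹ • ∫ y, exp (f x y) • f' x y ∂μ) x := by
  have hpos : 0 < ∫ y, exp (f x y) ∂μ := integral_exp_pos
    (integrable_exp_of_ae_le_s2 hf_meas.self_of_nhds (hf_le.mono fun y h => h x (mem_of_mem_nhds hs)))
  exact (hasFDerivAt_integral_exp hs hf_meas hf'_meas hf_le hf'_le hf').log hpos.ne'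

end LogIntegralExp

theorem integral_smul_gradient {α E : Type*} [MeasurableSpace α] {μ : Measure α}
    [NormedAddCommGroup E] [InnerProductSpace ℝ E] [CompleteSpace E]
    (w : α → ℝ) (h : α → E → ℝ) (x : E) :
    ∫ y, w y • gradient (h y) x ∂μ
      = (InnerProductSpace.toDual ℝ E).symm (∫ y, w y • fderiv ℝ (h y) x ∂μ) := by
  have : ∀ y, w y • gradient (h y) x
      = (InnerProductSpace.toDual ℝ E).symm (w y • fderiv ℝ (h y) x) := fun y =>
    (map_smul _ _ _).symm
  simp_rw [this]
  exact (InnerProductSpace.toDual ℝ E).symm.toContinuousLinearEquiv.integral_comp_comm _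

theorem hasFDerivAt_log_integral_exp_sub_div {E F : Type*} [NormedAddCommGroup E]
    [NormedSpace ℝ E] [ProperSpace E] [NormedAddCommGroup F] [NormedSpace ℝ F] [MeasurableSpace F]
    [OpensMeasurableSpace F] [SecondCountableTopology F] {X : Set F} (hXc : IsCompact X)
    {c : E × F → ℝ} (hc : ContDiff ℝ 1 c) {ν : Measure F} [IsFiniteMeasure ν] [NeZero ν]
    (hνX : ν Xᶜ = 0) {τ : ℝ} (hτ : 0 < τ) {ψ : F → ℝ} (hψm : Measurable ψ) {M : ℝ}
    (hM : ∀ y, ψ y ≤ M) (x : E) :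
    HasFDerivAt (fun x => log (∫ y, exp ((ψ y - c (x, y)) / τ) ∂ν))
      ((∫ y, exp ((ψ y - c (x, y)) / τ) ∂ν)⁻¹ •
        ∫ y, exp ((ψ y - c (x, y)) / τ) • (-τ⁻¹ • fderiv ℝ (fun z => c (z, y)) x) ∂ν) x := by
  have hK : IsCompact (Metric.closedBall x 1 ×ˢ X) := (isCompact_closedBall x 1).prod hXc
  obtain ⟨C, hC⟩ := hK.exists_bound_of_continuousOn hc.continuous.continuousOn
  obtain ⟨D, hD⟩ := hK.exists_bound_of_continuousOn
    (hc.continuous_fderiv_comp_prodMk_left).continuousOn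
  have hX : ∀ᵐ y ∂ν, y ∈ X := mem_ae_iff.2 hνX
  have hdiff : ∀ x' y, HasFDerivAt (fun z => (ψ y - c (z, y)) / τ)
      (-τ⁻¹ • fderiv ℝ (fun z => c (z, y)) x') x' := fun x' y => by
    have hcy : DifferentiableAt ℝ (fun z => c (z, y)) x' :=
      ((hc.differentiable one_ne_zero).comp
        (differentiable_id.prodMk (differentiable_const y))) x'
    simpa only [inv_mul_eq_div, smul_neg, neg_smul, zero_sub] using
      (hcy.hasFDerivAt.const_sub (ψ y)).const_mul τ⁻¹
  have hf_meas : ∀ x', AEStronglyMeasurable (fun y => (ψ y - c (x', y)) / τ) ν := fun x' =>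
    ((hψm.sub (hc.continuous.comp (continuous_const.prodMk continuous_id)).measurable).div_const
      τ).aestronglyMeasurable
  have hc'_cont : Continuous fun y => fderiv ℝ (fun z => c (z, y)) x :=
    hc.continuous_fderiv_comp_prodMk_left.comp (continuous_const.prodMk continuous_id)
  have hf'_meas : AEStronglyMeasurable (fun y => -τ⁻¹ • fderiv ℝ (fun z => c (z, y)) x) ν :=
    (hc'_cont.const_smul (-τ⁻¹)).aestronglyMeasurable
  have hf_le : ∀ᵐ y ∂ν, ∀ x' ∈ Metric.closedBall x 1, (ψ y - c (x', y)) / τ ≤ (M + C) / τ := by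
    filter_upwards [hX] with y hy x' hx'
    have := neg_le_of_abs_le (hC (x', y) ⟨hx', hy⟩)
    gcongr; linarith [hM y]
  have hf'_le : ∀ᵐ y ∂ν, ∀ x' ∈ Metric.closedBall x 1,
      ‖-τ⁻¹ • fderiv ℝ (fun z => c (z, y)) x'‖ ≤ τ⁻¹ * D := by
    filter_upwards [hX] with y hy x' hx'
    rw [norm_smul, norm_neg, norm_inv, norm_of_nonneg hτ.le]
    gcongr; exact hD (x', y) ⟨hx', hy⟩
  exact hasFDerivAt_log_integral_exp (Metric.closedBall_mem_nhds x one_pos)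
    (Eventually.of_forall hf_meas) hf'_meas hf_le hf'_le
    (Eventually.of_forall fun y x' _ => hdiff x' y)

theorem stmt_2_general {d : ℕ} (X : Set (Pt d)) (hXc : IsCompact X)
    (c : Pt d × Pt d → ℝ) (hc : ContDiff ℝ 1 c)
    (ν : Measure (Pt d)) [IsProbabilityMeasure ν] (hνX : ν Xᶜ = 0)
    (τ : ℝ) (hτ : 0 < τ)
    (ψ : Pt d → ℝ) (hψm : Measurable ψ) (hψb : ∃ M : ℝ, ∀ y, |ψ y| ≤ M)
    (φ : Pt d → ℝ)
    (hφ : ∀ x, φ x = -τ * Real.log (∫ y, Real.exp ((ψ y - c (x, y)) / τ) ∂ν)) :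
    ∀ x : Pt d,
      HasGradientAt φ
        ((∫ y, Real.exp ((ψ y - c (x, y)) / τ) ∂ν)⁻¹ •
          (∫ y, Real.exp ((ψ y - c (x, y)) / τ) • gradient (fun x' => c (x', y)) x ∂ν))
        x := by
  intro x
  obtain ⟨M, hM⟩ := hψb
  have hlog := hasFDerivAt_log_integral_exp_sub_div hXc hc hνX hτ hψm
    (fun y => le_of_abs_le (hM y)) x
  rw [hasGradientAt_iff_hasFDerivAt, integral_smul_gradient, map_smul,
    LinearIsometryEquiv.apply_symm_apply, funext hφ]
  refine (hlog.const_mul (-τ)).congr_fderiv ?_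
  simp_rw [smul_comm _ (-τ⁻¹), integral_smul, smul_smul]
  congr 1
  field_simp

/-- for a `C¹` cost `c`, the potential
`φ(x) = -τ log ∫ exp((ψ(y) - c(x,y))/τ) dν(y)` is differentiable everywhere, with gradient
`∇φ(x) = (∫ ∇ₓc(x,y) e^{(ψ(y)-c(x,y))/τ} dν(y)) / (∫ e^{(ψ(y)-c(x,y))/τ} dν(y))`. -/
theorem stmt_2 {d : ℕ} (X : Set (Pt d)) (hXc : IsCompact X) (hXne : X.Nonempty)
    (c : Pt d × Pt d → ℝ) (hc : ContDiff ℝ 1 c)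
    (ν : Measure (Pt d)) [IsProbabilityMeasure ν] (hνX : ν Xᶜ = 0)
    (τ : ℝ) (hτ : 0 < τ)
    (ψ : Pt d → ℝ) (hψm : Measurable ψ) (hψb : ∃ M : ℝ, ∀ y, |ψ y| ≤ M)
    (φ : Pt d → ℝ)
    (hφ : ∀ x, φ x = -τ * Real.log (∫ y, Real.exp ((ψ y - c (x, y)) / τ) ∂ν)) :
    ∀ x : Pt d,
      HasGradientAt φ
        ((∫ y, Real.exp ((ψ y - c (x, y)) / τ) ∂ν)⁻¹ •
          (∫ y, Real.exp ((ψ y - c (x, y)) / τ) • gradient (fun x' => c (x', y)) x ∂ν))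
        x :=
  stmt_2_general X hXc c hc ν hνX τ hτ ψ hψm hψb φ hφ
end

section
/- Let μ, ν ∈ P(X), let c : X×X → ℝ be continuous and τ > 0, and suppose (φ, ψ) is a pair of continuous functions solving the Schrödinger system for (μ, ν, c, τ). Define γ as the measure on X×X with density dγ/d(μ⊗ν)(x,y) = exp((φ(x) + ψ(y) − c(x,y))/τ). Then γ is a probability measure belonging to Π(μ,ν), it attains the infimum defining T_τ(μ,ν), and the optimal value satisfies T_τ(μ,ν) = ∫ c dγ + τ H(γ|μ⊗ν) = ∫ φ dμ + ∫ ψ dν. -/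
open MeasureTheory Real Set

-- Relative entropy `H(γ|ρ)`, with values in `(-∞, +∞]`.
open Classical in
noncomputable def relEnt {α : Type*} [MeasurableSpace α] (γ ρ : Measure α) : EReal :=
  if γ ≪ ρ ∧ Integrable (fun x => Real.log ((γ.rnDeriv ρ x).toReal)) γ
  then ((∫ x, Real.log ((γ.rnDeriv ρ x).toReal) ∂γ : ℝ) : EReal)
  else ⊤

-- Entropic optimal transport cost `T_τ(μ,ν) = inf_{γ ∈ Π(μ,ν)} ∫ c dγ + τ H(γ|μ⊗ν)`.
noncomputable def EOT {α : Type*} [MeasurableSpace α] (c : α × α → ℝ) (τ : ℝ)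
    (μ ν : Measure α) : EReal :=
  ⨅ γ : {γ : Measure (α × α) // γ.map Prod.fst = μ ∧ γ.map Prod.snd = ν},
    ((∫ q, c q ∂(γ : Measure (α × α)) : ℝ) : EReal)
      + (τ : EReal) * relEnt (γ : Measure (α × α)) (μ.prod ν)

/-!
The Schrödinger equations say exactly that `exp L`, with `L = (φ ⊕ ψ - c) / τ`, integrates to one
in each variable, so `γ = exp L • (μ ⊗ ν)` is a coupling of `μ` and `ν`; in particular it is the
exponential tilt of `μ ⊗ ν` by `L`. Because the marginals of a coupling `π` are fixed,
`∫ c dπ + τ ∫ L dπ = ∫ φ dμ + ∫ ψ dν`, and the Donsker–Varadhan inequality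
`∫ L dπ ≤ H(π | μ ⊗ ν)` (Gibbs' inequality for `π` against the tilt `γ`) is an equality at
`π = γ`. Continuity on the compact set `X`, which carries both marginals, makes every function
involved bounded, hence integrable against every coupling.
-/

open InformationTheory
open scoped ENNReal

section RelativeEntropy

variable {α : Type*} [MeasurableSpace α] {m ρ : Measure α} {f : α → ℝ}

lemma relEnt_of_ac_of_integrable (hmρ : m ≪ ρ) (h_int : Integrable (llr m ρ) m) :
    relEnt m ρ = ((∫ x, llr m ρ x ∂m : ℝ) : EReal) :=
  if_pos ⟨hmρ, h_int⟩

lemma relEnt_eq_top (h : ¬(m ≪ ρ ∧ Integrable (llr m ρ) m)) : relEnt m ρ = ⊤ :=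
  if_neg h

lemma integral_sub_log_integral_exp_le_relEnt [IsProbabilityMeasure m] [SigmaFinite ρ]
    (hfm : Integrable f m) (hfρ : Integrable (fun x => exp (f x)) ρ) :
    ((∫ x, f x ∂m - log (∫ x, exp (f x) ∂ρ) : ℝ) : EReal) ≤ relEnt m ρ := by
  by_cases h : m ≪ ρ ∧ Integrable (llr m ρ) m
  · obtain ⟨hmρ, h_int⟩ := h
    have : NeZero ρ := ⟨fun hρ => IsProbabilityMeasure.ne_zero m
      (Measure.absolutelyContinuous_zero_iff.mp (hρ ▸ hmρ))⟩
    have := isProbabilityMeasure_tilted hfρ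
    have gibbs := integral_llr_add_sub_measure_univ_nonneg
      (hmρ.trans (absolutelyContinuous_tilted hfρ))
      (integrable_llr_tilted_right hmρ hfm h_int hfρ)
    rw [integral_llr_tilted_right hmρ hfm hfρ h_int] at gibbs
    rw [relEnt_of_ac_of_integrable hmρ h_int, EReal.coe_le_coe_iff]
    simp only [probReal_univ] at gibbs
    linarith
  · rw [relEnt_eq_top h]
    exact le_top

lemma relEnt_tilted_self [SigmaFinite ρ] [NeZero ρ] (hfρ : Integrable (fun x => exp (f x)) ρ)
    (hf : Integrable f (ρ.tilted f)) :
    relEnt (ρ.tilted f) ρ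
      = ((∫ x, f x ∂(ρ.tilted f) - log (∫ x, exp (f x) ∂ρ) : ℝ) : EReal) := by
  have := isProbabilityMeasure_tilted hfρ
  have hllr : llr (ρ.tilted f) ρ =ᵐ[ρ.tilted f] fun x => f x - log (∫ x, exp (f x) ∂ρ) :=
    (tilted_absolutelyContinuous ρ f).ae_le (log_rnDeriv_tilted_left_self hfρ)
  rw [relEnt_of_ac_of_integrable (tilted_absolutelyContinuous ρ f)
      ((hf.sub (integrable_const _)).congr hllr.symm),
    integral_congr_ae hllr, integral_sub hf (integrable_const _), integral_const, probReal_univ,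
    one_smul]

lemma tilted_eq_withDensity_of_integral_exp_eq_one (h : ∫ x, exp (f x) ∂ρ = 1) :
    ρ.tilted f = ρ.withDensity (fun x => ENNReal.ofReal (exp (f x))) := by
  simp only [Measure.tilted, h, div_one]

lemma lintegral_ofReal_exp_sub_log_integral_exp [NeZero ρ]
    (hfρ : Integrable (fun x => exp (f x)) ρ) :
    ∫⁻ x, ENNReal.ofReal (exp (f x - log (∫ y, exp (f y) ∂ρ))) ∂ρ = 1 := by
  have := isProbabilityMeasure_tilted hfρ
  simpa [Measure.tilted, exp_sub, exp_log (integral_exp_pos hfρ)] using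
    measure_univ (μ := ρ.tilted f)

end RelativeEntropy

section Couplings

variable {α β : Type*} [MeasurableSpace α] [MeasurableSpace β]

lemma map_fst_withDensity_prod {μ : Measure α} {ν : Measure β} [SFinite μ] [SFinite ν]
    {F : α × β → ℝ≥0∞} (hF : AEMeasurable F (μ.prod ν))
    (h : ∀ᵐ x ∂μ, ∫⁻ y, F (x, y) ∂ν = 1) :
    ((μ.prod ν).withDensity F).map Prod.fst = μ := by
  ext s hs
  have hF' : AEMeasurable F ((μ.restrict s).prod ν) :=
    hF.mono_ac (Measure.restrict_le_self.absolutelyContinuous.prod .rfl)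
  rw [Measure.map_apply measurable_fst hs, ← prod_univ, withDensity_apply _ (hs.prod .univ),
    ← Measure.prod_restrict, Measure.restrict_univ, lintegral_prod _ hF',
    lintegral_congr_ae (ae_restrict_of_ae h)]
  simp

lemma map_snd_withDensity_prod {μ : Measure α} {ν : Measure β} [SFinite μ] [SFinite ν]
    {F : α × β → ℝ≥0∞} (hF : AEMeasurable F (μ.prod ν))
    (h : ∀ᵐ y ∂ν, ∫⁻ x, F (x, y) ∂μ = 1) :
    ((μ.prod ν).withDensity F).map Prod.snd = ν := by
  ext t ht
  have hF' : AEMeasurable F (μ.prod (ν.restrict t)) :=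
    hF.mono_ac (Measure.AbsolutelyContinuous.rfl.prod Measure.restrict_le_self.absolutelyContinuous)
  rw [Measure.map_apply measurable_snd ht, ← univ_prod,
    withDensity_apply _ (MeasurableSet.univ.prod ht),
    ← Measure.prod_restrict, Measure.restrict_univ, lintegral_prod_symm _ hF',
    lintegral_congr_ae (ae_restrict_of_ae h)]
  simp

lemma isProbabilityMeasure_of_map_eq {m : Measure α} {μ : Measure β} [IsProbabilityMeasure μ]
    (f : α → β) (h : m.map f = μ) : IsProbabilityMeasure m := by
  have : IsProbabilityMeasure (m.map f) := h ▸ inferInstance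
  exact Measure.isProbabilityMeasure_of_map f

lemma ae_mem_prod_of_map_eq {m : Measure (α × β)} {μ : Measure α} {ν : Measure β}
    {X : Set α} {Y : Set β} (hX : MeasurableSet X) (hY : MeasurableSet Y)
    (h1 : m.map Prod.fst = μ) (h2 : m.map Prod.snd = ν) (hμX : μ Xᶜ = 0)
    (hνY : ν Yᶜ = 0) : ∀ᵐ q ∂m, q ∈ X ×ˢ Y := by
  have hfst : ∀ᵐ q ∂m, q.1 ∈ X :=
    (ae_map_iff measurable_fst.aemeasurable hX).mp (h1 ▸ mem_ae_iff.mpr hμX)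
  have hsnd : ∀ᵐ q ∂m, q.2 ∈ Y :=
    (ae_map_iff measurable_snd.aemeasurable hY).mp (h2 ▸ mem_ae_iff.mpr hνY)
  filter_upwards [hfst, hsnd] with q hq1 hq2 using ⟨hq1, hq2⟩

lemma ae_mem_prod_prod {μ : Measure α} {ν : Measure β} [IsProbabilityMeasure μ]
    [IsProbabilityMeasure ν] {X : Set α} {Y : Set β} (hX : MeasurableSet X)
    (hY : MeasurableSet Y) (hμX : μ Xᶜ = 0) (hνY : ν Yᶜ = 0) : ∀ᵐ q ∂(μ.prod ν), q ∈ X ×ˢ Y :=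
  ae_mem_prod_of_map_eq hX hY (by simp) (by simp) hμX hνY

end Couplings

lemma ContinuousOn.integrable_of_ae_mem {α E : Type*} [TopologicalSpace α] [T2Space α]
    [MeasurableSpace α] [OpensMeasurableSpace α] [NormedAddCommGroup E] {m : Measure α}
    [IsFiniteMeasure m] {K : Set α} {f : α → E} (hf : ContinuousOn f K) (hK : IsCompact K)
    (hmK : ∀ᵐ x ∂m, x ∈ K) : Integrable f m := by
  simpa [IntegrableOn, Measure.restrict_eq_self_of_ae_mem hmK] using
    hf.integrableOn_compact (μ := m) hK

lemma EOT_eq_of_forall_le {α : Type*} [MeasurableSpace α] {c : α × α → ℝ} {τ : ℝ}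
    {μ ν : Measure α} {γ : Measure (α × α)} {v : EReal} (h1 : γ.map Prod.fst = μ)
    (h2 : γ.map Prod.snd = ν)
    (hγ : ((∫ q, c q ∂γ : ℝ) : EReal) + (τ : EReal) * relEnt γ (μ.prod ν) = v)
    (hle : ∀ m : Measure (α × α), m.map Prod.fst = μ → m.map Prod.snd = ν →
      v ≤ ((∫ q, c q ∂m : ℝ) : EReal) + (τ : EReal) * relEnt m (μ.prod ν)) :
    EOT c τ μ ν = v :=
  le_antisymm (iInf_le_of_le ⟨γ, h1, h2⟩ hγ.le) (le_iInf fun m => hle m m.2.1 m.2.2)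

noncomputable def schrodingerLogDensity {α : Type*} (φ ψ : α → ℝ) (c : α × α → ℝ) (τ : ℝ)
    (q : α × α) : ℝ :=
  (φ q.1 + ψ q.2 - c q) / τ

lemma continuousOn_schrodingerLogDensity {α : Type*} [TopologicalSpace α] {X : Set α}
    {c : α × α → ℝ} {τ : ℝ} {φ ψ : α → ℝ} (hc : Continuous c) (hφc : ContinuousOn φ X)
    (hψc : ContinuousOn ψ X) : ContinuousOn (schrodingerLogDensity φ ψ c τ) (X ×ˢ X) :=
  (((hφc.comp continuousOn_fst fun _ hq => hq.1).add
    (hψc.comp continuousOn_snd fun _ hq => hq.2)).sub hc.continuousOn).div_const τ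

noncomputable def schrodingerCoupling {α : Type*} [MeasurableSpace α] (μ ν : Measure α)
    (φ ψ : α → ℝ) (c : α × α → ℝ) (τ : ℝ) : Measure (α × α) :=
  (μ.prod ν).withDensity fun q => ENNReal.ofReal (exp (schrodingerLogDensity φ ψ c τ q))

section Schrodinger

variable {α : Type*} [MeasurableSpace α] [TopologicalSpace α] [T2Space α]
  [OpensMeasurableSpace α] {X : Set α} {μ ν : Measure α} {c : α × α → ℝ} {τ : ℝ} {φ ψ : α → ℝ}

lemma ae_lintegral_exp_schrodingerLogDensity_right [IsProbabilityMeasure ν] (hX : IsCompact X)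
    (hμX : μ Xᶜ = 0) (hνX : ν Xᶜ = 0) (hc : Continuous c) (hτ : τ ≠ 0) (hψc : ContinuousOn ψ X)
    (hφ : ∀ x ∈ X, φ x = -τ * log (∫ y, exp ((ψ y - c (x, y)) / τ) ∂ν)) :
    ∀ᵐ x ∂μ, ∫⁻ y, ENNReal.ofReal (exp (schrodingerLogDensity φ ψ c τ (x, y))) ∂ν = 1 := by
  filter_upwards [mem_ae_iff.mpr hμX] with x hx
  have hint : Integrable (fun y => exp ((ψ y - c (x, y)) / τ)) ν :=
    ContinuousOn.integrable_of_ae_mem (by fun_prop) hX (mem_ae_iff.mpr hνX)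
  have hL (y : α) : schrodingerLogDensity φ ψ c τ (x, y)
      = (ψ y - c (x, y)) / τ - log (∫ z, exp ((ψ z - c (x, z)) / τ) ∂ν) := by
    rw [schrodingerLogDensity, hφ x hx]
    field_simp
    ring
  simp_rw [hL]
  exact lintegral_ofReal_exp_sub_log_integral_exp hint

lemma ae_lintegral_exp_schrodingerLogDensity_left [IsProbabilityMeasure μ] (hX : IsCompact X)
    (hμX : μ Xᶜ = 0) (hνX : ν Xᶜ = 0) (hc : Continuous c) (hτ : τ ≠ 0) (hφc : ContinuousOn φ X)
    (hψ : ∀ y ∈ X, ψ y = -τ * log (∫ x, exp ((φ x - c (x, y)) / τ) ∂μ)) :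
    ∀ᵐ y ∂ν, ∫⁻ x, ENNReal.ofReal (exp (schrodingerLogDensity φ ψ c τ (x, y))) ∂μ = 1 := by
  -- the right-hand statement for `c ∘ Prod.swap`, with `(μ, φ)` and `(ν, ψ)` exchanged
  have := ae_lintegral_exp_schrodingerLogDensity_right (c := c ∘ Prod.swap) hX hνX hμX
    (hc.comp continuous_swap) hτ hφc hψ
  simpa [schrodingerLogDensity, add_comm] using this

variable [SecondCountableTopology α] [IsProbabilityMeasure μ] [IsProbabilityMeasure ν]

lemma integral_add_mul_integral_schrodingerLogDensity (hX : IsCompact X) (hμX : μ Xᶜ = 0)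
    (hνX : ν Xᶜ = 0) (hc : Continuous c) (hτ : τ ≠ 0) (hφc : ContinuousOn φ X)
    (hψc : ContinuousOn ψ X) {m : Measure (α × α)} (h1 : m.map Prod.fst = μ)
    (h2 : m.map Prod.snd = ν) :
    ∫ q, c q ∂m + τ * ∫ q, schrodingerLogDensity φ ψ c τ q ∂m = ∫ x, φ x ∂μ + ∫ y, ψ y ∂ν := by
  have := isProbabilityMeasure_of_map_eq Prod.fst h1
  have hXX := ae_mem_prod_of_map_eq hX.measurableSet hX.measurableSet h1 h2 hμX hνX
  have hφm : Integrable (fun q : α × α => φ q.1) m :=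
    (hφc.comp continuousOn_fst fun _ hq => hq.1).integrable_of_ae_mem (hX.prod hX) hXX
  have hψm : Integrable (fun q : α × α => ψ q.2) m :=
    (hψc.comp continuousOn_snd fun _ hq => hq.2).integrable_of_ae_mem (hX.prod hX) hXX
  have hcm : Integrable c m := hc.continuousOn.integrable_of_ae_mem (hX.prod hX) hXX
  have hfst : ∫ q, φ q.1 ∂m = ∫ x, φ x ∂μ := by
    rw [← h1, integral_map measurable_fst.aemeasurable]
    rw [h1]
    exact (hφc.integrable_of_ae_mem hX (mem_ae_iff.mpr hμX)).aestronglyMeasurable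
  have hsnd : ∫ q, ψ q.2 ∂m = ∫ y, ψ y ∂ν := by
    rw [← h2, integral_map measurable_snd.aemeasurable]
    rw [h2]
    exact (hψc.integrable_of_ae_mem hX (mem_ae_iff.mpr hνX)).aestronglyMeasurable
  have hτL (q : α × α) : τ * schrodingerLogDensity φ ψ c τ q = φ q.1 + ψ q.2 - c q := by
    rw [schrodingerLogDensity]
    field_simp
  rw [← integral_const_mul]
  simp_rw [hτL]
  rw [integral_sub (f := fun q => φ q.1 + ψ q.2) (hφm.add hψm) hcm, integral_add hφm hψm, hfst,
    hsnd]
  ring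

lemma integrable_exp_schrodingerLogDensity (hX : IsCompact X) (hμX : μ Xᶜ = 0)
    (hνX : ν Xᶜ = 0) (hc : Continuous c) (hφc : ContinuousOn φ X) (hψc : ContinuousOn ψ X) :
    Integrable (fun q => exp (schrodingerLogDensity φ ψ c τ q)) (μ.prod ν) :=
  (continuousOn_schrodingerLogDensity hc hφc hψc).rexp.integrable_of_ae_mem (hX.prod hX)
    (ae_mem_prod_prod hX.measurableSet hX.measurableSet hμX hνX)

lemma map_fst_schrodingerCoupling (hX : IsCompact X) (hμX : μ Xᶜ = 0) (hνX : ν Xᶜ = 0)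
    (hc : Continuous c) (hτ : τ ≠ 0) (hφc : ContinuousOn φ X) (hψc : ContinuousOn ψ X)
    (hφ : ∀ x ∈ X, φ x = -τ * log (∫ y, exp ((ψ y - c (x, y)) / τ) ∂ν)) :
    (schrodingerCoupling μ ν φ ψ c τ).map Prod.fst = μ :=
  map_fst_withDensity_prod
    (integrable_exp_schrodingerLogDensity hX hμX hνX hc hφc hψc).aemeasurable.ennreal_ofReal
    (ae_lintegral_exp_schrodingerLogDensity_right hX hμX hνX hc hτ hψc hφ)

lemma map_snd_schrodingerCoupling (hX : IsCompact X) (hμX : μ Xᶜ = 0) (hνX : ν Xᶜ = 0)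
    (hc : Continuous c) (hτ : τ ≠ 0) (hφc : ContinuousOn φ X) (hψc : ContinuousOn ψ X)
    (hψ : ∀ y ∈ X, ψ y = -τ * log (∫ x, exp ((φ x - c (x, y)) / τ) ∂μ)) :
    (schrodingerCoupling μ ν φ ψ c τ).map Prod.snd = ν :=
  map_snd_withDensity_prod
    (integrable_exp_schrodingerLogDensity hX hμX hνX hc hφc hψc).aemeasurable.ennreal_ofReal
    (ae_lintegral_exp_schrodingerLogDensity_left hX hμX hνX hc hτ hφc hψ)

lemma integral_exp_schrodingerLogDensity (hX : IsCompact X) (hμX : μ Xᶜ = 0)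
    (hνX : ν Xᶜ = 0) (hc : Continuous c) (hτ : τ ≠ 0) (hφc : ContinuousOn φ X)
    (hψc : ContinuousOn ψ X)
    (hφ : ∀ x ∈ X, φ x = -τ * log (∫ y, exp ((ψ y - c (x, y)) / τ) ∂ν)) :
    ∫ q, exp (schrodingerLogDensity φ ψ c τ q) ∂(μ.prod ν) = 1 := by
  have := isProbabilityMeasure_of_map_eq Prod.fst
    (map_fst_schrodingerCoupling hX hμX hνX hc hτ hφc hψc hφ)
  rw [← ENNReal.ofReal_eq_one, ofReal_integral_eq_lintegral_ofReal
    (integrable_exp_schrodingerLogDensity hX hμX hνX hc hφc hψc)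
    (ae_of_all _ fun _ => (exp_pos _).le)]
  simpa [schrodingerCoupling] using measure_univ (μ := schrodingerCoupling μ ν φ ψ c τ)

lemma integral_add_mul_relEnt_schrodingerCoupling (hX : IsCompact X) (hμX : μ Xᶜ = 0)
    (hνX : ν Xᶜ = 0) (hc : Continuous c) (hτ : τ ≠ 0) (hφc : ContinuousOn φ X)
    (hψc : ContinuousOn ψ X)
    (hφ : ∀ x ∈ X, φ x = -τ * log (∫ y, exp ((ψ y - c (x, y)) / τ) ∂ν))
    (hψ : ∀ y ∈ X, ψ y = -τ * log (∫ x, exp ((φ x - c (x, y)) / τ) ∂μ)) :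
    ((∫ q, c q ∂(schrodingerCoupling μ ν φ ψ c τ) : ℝ) : EReal)
      + (τ : EReal) * relEnt (schrodingerCoupling μ ν φ ψ c τ) (μ.prod ν)
      = ((∫ x, φ x ∂μ + ∫ y, ψ y ∂ν : ℝ) : EReal) := by
  have h1 := map_fst_schrodingerCoupling hX hμX hνX hc hτ hφc hψc hφ
  have h2 := map_snd_schrodingerCoupling hX hμX hνX hc hτ hφc hψc hψ
  have hnorm := integral_exp_schrodingerLogDensity hX hμX hνX hc hτ hφc hψc hφ
  have := isProbabilityMeasure_of_map_eq Prod.fst h1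
  have hLγ : Integrable (schrodingerLogDensity φ ψ c τ) (schrodingerCoupling μ ν φ ψ c τ) :=
    (continuousOn_schrodingerLogDensity hc hφc hψc).integrable_of_ae_mem (hX.prod hX)
      (ae_mem_prod_of_map_eq hX.measurableSet hX.measurableSet h1 h2 hμX hνX)
  have hdual := integral_add_mul_integral_schrodingerLogDensity hX hμX hνX hc hτ hφc hψc h1 h2
  rw [schrodingerCoupling, ← tilted_eq_withDensity_of_integral_exp_eq_one hnorm] at hLγ hdual ⊢
  rw [relEnt_tilted_self (integrable_exp_schrodingerLogDensity hX hμX hνX hc hφc hψc) hLγ,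
    hnorm, log_one, sub_zero]
  exact_mod_cast hdual

lemma le_integral_add_mul_relEnt (hX : IsCompact X) (hμX : μ Xᶜ = 0)
    (hνX : ν Xᶜ = 0) (hc : Continuous c) (hτ : 0 < τ) (hφc : ContinuousOn φ X)
    (hψc : ContinuousOn ψ X)
    (hφ : ∀ x ∈ X, φ x = -τ * log (∫ y, exp ((ψ y - c (x, y)) / τ) ∂ν))
    {m : Measure (α × α)} (h1 : m.map Prod.fst = μ) (h2 : m.map Prod.snd = ν) :
    ((∫ x, φ x ∂μ + ∫ y, ψ y ∂ν : ℝ) : EReal)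
      ≤ ((∫ q, c q ∂m : ℝ) : EReal) + (τ : EReal) * relEnt m (μ.prod ν) := by
  have := isProbabilityMeasure_of_map_eq Prod.fst h1
  have hLm : Integrable (schrodingerLogDensity φ ψ c τ) m :=
    (continuousOn_schrodingerLogDensity hc hφc hψc).integrable_of_ae_mem (hX.prod hX)
      (ae_mem_prod_of_map_eq hX.measurableSet hX.measurableSet h1 h2 hμX hνX)
  have hDV := integral_sub_log_integral_exp_le_relEnt hLm
    (integrable_exp_schrodingerLogDensity hX hμX hνX hc hφc hψc)
  rw [integral_exp_schrodingerLogDensity hX hμX hνX hc hτ.ne' hφc hψc hφ, log_one,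
    sub_zero] at hDV
  rw [← integral_add_mul_integral_schrodingerLogDensity hX hμX hνX hc hτ.ne' hφc hψc h1 h2,
    EReal.coe_add, EReal.coe_mul]
  gcongr

end Schrodinger

theorem stmt_3_general {d : ℕ} (X : Set (Pt d)) (hXc : IsCompact X)
    (μ ν : Measure (Pt d)) [IsProbabilityMeasure μ] [IsProbabilityMeasure ν]
    (hμX : μ Xᶜ = 0) (hνX : ν Xᶜ = 0)
    (c : Pt d × Pt d → ℝ) (hc : Continuous c) (τ : ℝ) (hτ : 0 < τ)
    (φ ψ : Pt d → ℝ) (hφc : ContinuousOn φ X) (hψc : ContinuousOn ψ X)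
    (hφ : ∀ x ∈ X, φ x = -τ * Real.log (∫ y, Real.exp ((ψ y - c (x, y)) / τ) ∂ν))
    (hψ : ∀ y ∈ X, ψ y = -τ * Real.log (∫ x, Real.exp ((φ x - c (x, y)) / τ) ∂μ))
    (γ : Measure (Pt d × Pt d))
    (hγ : γ = (μ.prod ν).withDensity
        (fun q => ENNReal.ofReal (Real.exp ((φ q.1 + ψ q.2 - c q) / τ)))) :
    IsProbabilityMeasure γ ∧ γ.map Prod.fst = μ ∧ γ.map Prod.snd = ν ∧
    ((∫ q, c q ∂γ : ℝ) : EReal) + (τ : EReal) * relEnt γ (μ.prod ν) = EOT c τ μ ν ∧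
    EOT c τ μ ν = ((∫ x, φ x ∂μ + ∫ y, ψ y ∂ν : ℝ) : EReal) := by
  replace hγ : γ = schrodingerCoupling μ ν φ ψ c τ := hγ
  subst hγ
  have h1 := map_fst_schrodingerCoupling hXc hμX hνX hc hτ.ne' hφc hψc hφ
  have h2 := map_snd_schrodingerCoupling hXc hμX hνX hc hτ.ne' hφc hψc hψ
  have hvalue :=
    integral_add_mul_relEnt_schrodingerCoupling hXc hμX hνX hc hτ.ne' hφc hψc hφ hψ
  have hEOT : EOT c τ μ ν = ((∫ x, φ x ∂μ + ∫ y, ψ y ∂ν : ℝ) : EReal) :=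
    EOT_eq_of_forall_le h1 h2 hvalue fun _ hm1 hm2 =>
      le_integral_add_mul_relEnt hXc hμX hνX hc hτ hφc hψc hφ hm1 hm2
  exact ⟨isProbabilityMeasure_of_map_eq Prod.fst h1, h1, h2, hvalue.trans hEOT.symm, hEOT⟩

/-- if `(φ,ψ)` solves the Schrödinger system then the measure `γ` with density
`exp((φ(x)+ψ(y)-c(x,y))/τ)` w.r.t. `μ⊗ν` is a coupling of `(μ,ν)` attaining the infimum
defining `T_τ(μ,ν)`, and `T_τ(μ,ν) = ∫ c dγ + τ H(γ|μ⊗ν) = ∫ φ dμ + ∫ ψ dν`. -/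
theorem stmt_3 {d : ℕ} (X : Set (Pt d)) (hXc : IsCompact X) (hXne : X.Nonempty)
    (μ ν : Measure (Pt d)) [IsProbabilityMeasure μ] [IsProbabilityMeasure ν]
    (hμX : μ Xᶜ = 0) (hνX : ν Xᶜ = 0)
    (c : Pt d × Pt d → ℝ) (hc : Continuous c) (τ : ℝ) (hτ : 0 < τ)
    (φ ψ : Pt d → ℝ) (hφc : ContinuousOn φ X) (hψc : ContinuousOn ψ X)
    (hφ : ∀ x ∈ X, φ x = -τ * Real.log (∫ y, Real.exp ((ψ y - c (x, y)) / τ) ∂ν))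
    (hψ : ∀ y ∈ X, ψ y = -τ * Real.log (∫ x, Real.exp ((φ x - c (x, y)) / τ) ∂μ))
    (γ : Measure (Pt d × Pt d))
    (hγ : γ = (μ.prod ν).withDensity
        (fun q => ENNReal.ofReal (Real.exp ((φ q.1 + ψ q.2 - c q) / τ)))) :
    IsProbabilityMeasure γ ∧ γ.map Prod.fst = μ ∧ γ.map Prod.snd = ν ∧
    ((∫ q, c q ∂γ : ℝ) : EReal) + (τ : EReal) * relEnt γ (μ.prod ν) = EOT c τ μ ν ∧
    EOT c τ μ ν = ((∫ x, φ x ∂μ + ∫ y, ψ y ∂ν : ℝ) : EReal) :=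
  stmt_3_general X hXc μ ν hμX hνX c hc τ hτ φ ψ hφc hψc hφ hψ γ hγ
end

section
/- Let c : X×X → ℝ be continuous and τ > 0. Then the entropic optimal transport cost T_τ is convex separately in each of its arguments: for all μ₀, μ₁, ν ∈ P(X) and every t ∈ [0,1], T_τ((1−t)μ₀ + tμ₁, ν) ≤ (1−t) T_τ(μ₀, ν) + t T_τ(μ₁, ν), and symmetrically in the second argument. -/
open MeasureTheory Real Set

open InformationTheory
open scoped ENNReal

/-!
Mixing couplings `γ₀ ∈ Π(μ₀, ν)` and `γ₁ ∈ Π(μ₁, ν)` with weights `s, t` gives a coupling of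
`(s μ₀ + t μ₁, ν)`, and the reference measure `(s μ₀ + t μ₁) ⊗ ν` is the same mixture of `μ₀ ⊗ ν`
and `μ₁ ⊗ ν`. The transport cost is linear in the coupling, and the entropy term is controlled by
the joint convexity of the Kullback–Leibler divergence, which reduces pointwise to the convexity of
`x log x`. Applying this to near-optimal `γ₀, γ₁` gives convexity in the first argument; `T_τ` is
finite there because the cost is bounded on `X × X` and the product coupling has zero entropy.
Transposing couplings exchanges the two arguments without increasing the entropy (data
processing), which gives convexity in the second argument.
-/

lemma ofReal_klFun_add_le {a b u v : ℝ≥0∞} (hab : a + b = 1) (hu : a * u ≠ ∞) (hv : b * v ≠ ∞) :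
    ENNReal.ofReal (klFun (a * u + b * v).toReal)
      ≤ a * ENNReal.ofReal (klFun u.toReal) + b * ENNReal.ofReal (klFun v.toReal) := by
  have ha : a ≠ ∞ := ne_top_of_le_ne_top ENNReal.one_ne_top (hab ▸ le_self_add)
  have hb : b ≠ ∞ := ne_top_of_le_ne_top ENNReal.one_ne_top (hab ▸ le_add_self)
  have hab' : a.toReal + b.toReal = 1 := by
    rw [← ENNReal.toReal_add ha hb, hab, ENNReal.toReal_one]
  have hconv := convexOn_klFun.2 (mem_Ici.2 (ENNReal.toReal_nonneg (a := u)))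
    (mem_Ici.2 (ENNReal.toReal_nonneg (a := v))) ENNReal.toReal_nonneg ENNReal.toReal_nonneg hab'
  simp only [smul_eq_mul] at hconv
  rw [ENNReal.toReal_add hu hv, ENNReal.toReal_mul, ENNReal.toReal_mul]
  calc ENNReal.ofReal (klFun (a.toReal * u.toReal + b.toReal * v.toReal))
      ≤ ENNReal.ofReal (a.toReal * klFun u.toReal + b.toReal * klFun v.toReal) :=
        ENNReal.ofReal_le_ofReal hconv
    _ = a * ENNReal.ofReal (klFun u.toReal) + b * ENNReal.ofReal (klFun v.toReal) := by
        have hnn (x y : ℝ≥0∞) : 0 ≤ x.toReal * klFun y.toReal :=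
          mul_nonneg ENNReal.toReal_nonneg (klFun_nonneg ENNReal.toReal_nonneg)
        rw [ENNReal.ofReal_add (hnn a u) (hnn b v), ENNReal.ofReal_mul ENNReal.toReal_nonneg,
          ENNReal.ofReal_mul ENNReal.toReal_nonneg, ENNReal.ofReal_toReal ha,
          ENNReal.ofReal_toReal hb]

lemma ofReal_add_ofReal_eq_one {s t : ℝ} (hs : 0 ≤ s) (ht : 0 ≤ t) (hst : s + t = 1) :
    ENNReal.ofReal s + ENNReal.ofReal t = 1 := by
  rw [← ENNReal.ofReal_add hs ht, hst, ENNReal.ofReal_one]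

lemma EReal.coe_mul_add_coe_ennreal {s : ℝ} (hs : 0 ≤ s) (r : ℝ) (e : ℝ≥0∞) :
    (s : EReal) * ((r : EReal) + e)
      = ((s * r : ℝ) : EReal) + ((ENNReal.ofReal s * e : ℝ≥0∞) : EReal) := by
  rw [EReal.left_distrib_of_nonneg_of_ne_top (EReal.coe_nonneg.2 hs) (EReal.coe_ne_top s),
    EReal.coe_ennreal_mul, EReal.coe_ennreal_ofReal, max_eq_left hs, EReal.coe_mul]

section Divergence

variable {α : Type*} [MeasurableSpace α]

lemma rnDeriv_smul_add_smul (γ₀ γ₁ κ : Measure α) [IsFiniteMeasure γ₀] [IsFiniteMeasure γ₁]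
    [SigmaFinite κ] {s t : ℝ≥0∞} (hs : s ≠ ∞) (ht : t ≠ ∞) :
    (s • γ₀ + t • γ₁).rnDeriv κ =ᵐ[κ] s • γ₀.rnDeriv κ + t • γ₁.rnDeriv κ := by
  have := γ₀.smul_finite hs
  have := γ₁.smul_finite ht
  filter_upwards [Measure.rnDeriv_add (s • γ₀) (t • γ₁) κ,
    Measure.rnDeriv_smul_left_of_ne_top γ₀ κ hs,
    Measure.rnDeriv_smul_left_of_ne_top γ₁ κ ht] with x h h₀ h₁
  rw [h, Pi.add_apply, h₀, h₁, Pi.add_apply]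

lemma isProbabilityMeasure_smul_add_smul (μ₀ μ₁ : Measure α) [IsProbabilityMeasure μ₀]
    [IsProbabilityMeasure μ₁] {s t : ℝ≥0∞} (hst : s + t = 1) :
    IsProbabilityMeasure (s • μ₀ + t • μ₁) :=
  ⟨by simp [hst]⟩

lemma klDiv_smul_add_smul_le_of_ac {γ₀ γ₁ ρ₀ ρ₁ : Measure α} [IsFiniteMeasure γ₀]
    [IsFiniteMeasure γ₁] [IsFiniteMeasure ρ₀] [IsFiniteMeasure ρ₁] {s t : ℝ≥0∞} (hst : s + t = 1)
    (hs0 : s ≠ 0) (ht0 : t ≠ 0) (h₀ : γ₀ ≪ ρ₀) (h₁ : γ₁ ≪ ρ₁) :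
    klDiv (s • γ₀ + t • γ₁) (s • ρ₀ + t • ρ₁) ≤ s * klDiv γ₀ ρ₀ + t * klDiv γ₁ ρ₁ := by
  have hs : s ≠ ∞ := ne_top_of_le_ne_top ENNReal.one_ne_top (hst ▸ le_self_add)
  have ht : t ≠ ∞ := ne_top_of_le_ne_top ENNReal.one_ne_top (hst ▸ le_add_self)
  have := γ₀.smul_finite hs
  have := γ₁.smul_finite ht
  have := ρ₀.smul_finite hs
  have := ρ₁.smul_finite ht
  set ρ := s • ρ₀ + t • ρ₁
  have hρ₀ : ρ₀ ≪ ρ :=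
    (Measure.absolutelyContinuous_smul hs0).trans (Measure.AbsolutelyContinuous.rfl.add_right _)
  have hρ₁ : ρ₁ ≪ ρ :=
    (Measure.absolutelyContinuous_smul ht0).trans (Measure.AbsolutelyContinuous.rfl.add_right' _)
  have hγ : s • γ₀ + t • γ₁ ≪ ρ := (h₀.smul s).add (h₁.smul t)
  rw [klDiv_eq_lintegral_klFun_of_ac hγ, klDiv_eq_lintegral_klFun_of_ac h₀,
    klDiv_eq_lintegral_klFun_of_ac h₁, ← lintegral_rnDeriv_mul hρ₀ (by fun_prop),
    ← lintegral_rnDeriv_mul hρ₁ (by fun_prop), ← lintegral_const_mul' _ _ hs,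
    ← lintegral_const_mul' _ _ ht, ← lintegral_add_left' (by fun_prop)]
  -- With `gᵢ = dρᵢ/dρ` and `hᵢ = dγᵢ/dρᵢ`, the density of the mixture of the `γᵢ` is
  -- `s g₀ h₀ + t g₁ h₁` while `s g₀ + t g₁ = 1`: pointwise convexity of `klFun`.
  refine lintegral_mono_ae ?_
  filter_upwards [rnDeriv_smul_add_smul γ₀ γ₁ ρ hs ht, rnDeriv_smul_add_smul ρ₀ ρ₁ ρ hs ht,
    Measure.rnDeriv_self ρ, Measure.rnDeriv_mul_rnDeriv h₀ (κ := ρ),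
    Measure.rnDeriv_mul_rnDeriv h₁ (κ := ρ), Measure.rnDeriv_ne_top γ₀ ρ,
    Measure.rnDeriv_ne_top γ₁ ρ] with x hγx hρx hρ1 hx₀ hx₁ hf₀ hf₁
  simp only [Pi.add_apply, Pi.smul_apply, Pi.mul_apply, smul_eq_mul] at hγx hρx hx₀ hx₁
  rw [hρ1] at hρx
  calc ENNReal.ofReal (klFun ((s • γ₀ + t • γ₁).rnDeriv ρ x).toReal)
      = ENNReal.ofReal (klFun (s * ρ₀.rnDeriv ρ x * γ₀.rnDeriv ρ₀ x
          + t * ρ₁.rnDeriv ρ x * γ₁.rnDeriv ρ₁ x).toReal) := by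
        rw [hγx, ← hx₀, ← hx₁]; ring_nf
    _ ≤ _ := ofReal_klFun_add_le hρx.symm ?_ ?_
    _ = _ := by ring
  · rw [mul_assoc, mul_comm (ρ₀.rnDeriv ρ x), hx₀]; exact ENNReal.mul_ne_top hs hf₀
  · rw [mul_assoc, mul_comm (ρ₁.rnDeriv ρ x), hx₁]; exact ENNReal.mul_ne_top ht hf₁

lemma klDiv_smul_add_smul_le (γ₀ γ₁ ρ₀ ρ₁ : Measure α) [IsFiniteMeasure γ₀]
    [IsFiniteMeasure γ₁] [IsFiniteMeasure ρ₀] [IsFiniteMeasure ρ₁] {s t : ℝ≥0∞} (hst : s + t = 1) :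
    klDiv (s • γ₀ + t • γ₁) (s • ρ₀ + t • ρ₁) ≤ s * klDiv γ₀ ρ₀ + t * klDiv γ₁ ρ₁ := by
  rcases eq_or_ne s 0 with rfl | hs0
  · simp_all
  rcases eq_or_ne t 0 with rfl | ht0
  · simp_all
  by_cases h₀ : γ₀ ≪ ρ₀
  swap; · simp [h₀, hs0]
  by_cases h₁ : γ₁ ≪ ρ₁
  swap; · simp [h₁, ht0]
  exact klDiv_smul_add_smul_le_of_ac hst hs0 ht0 h₀ h₁

lemma relEnt_eq_klDiv (γ ρ : Measure α) [IsProbabilityMeasure γ] [IsProbabilityMeasure ρ] :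
    relEnt γ ρ = klDiv γ ρ := by
  unfold relEnt
  split_ifs with h
  -- for probability measures the mass correction `ρ.real univ - γ.real univ` in `klDiv` vanishes
  · rw [klDiv_of_ac_of_integrable h.1 h.2]
    have hnn := integral_llr_add_sub_measure_univ_nonneg h.1 h.2
    simp only [probReal_univ, add_sub_cancel_right] at hnn ⊢
    rw [EReal.coe_ennreal_ofReal, max_eq_left hnn]
    rfl
  · rw [klDiv_eq_top_iff.2 fun hac hint => h ⟨hac, hint⟩]
    rfl

lemma relEnt_map_le (γ ρ : Measure α) [IsProbabilityMeasure γ] [IsProbabilityMeasure ρ]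
    {β : Type*} [MeasurableSpace β] {f : α → β} (hf : Measurable f) :
    relEnt (γ.map f) (ρ.map f) ≤ relEnt γ ρ := by
  have := Measure.isProbabilityMeasure_map (μ := γ) hf.aemeasurable
  have := Measure.isProbabilityMeasure_map (μ := ρ) hf.aemeasurable
  rw [relEnt_eq_klDiv, relEnt_eq_klDiv]
  exact EReal.coe_ennreal_le_coe_ennreal_iff.2 (klDiv_map_le γ ρ hf)

lemma integral_add_mul_relEnt_smul_add_smul_le {f : α → ℝ} {τ : ℝ} (hτ : 0 ≤ τ)
    {γ₀ γ₁ ρ₀ ρ₁ : Measure α} [IsProbabilityMeasure γ₀] [IsProbabilityMeasure γ₁]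
    [IsProbabilityMeasure ρ₀] [IsProbabilityMeasure ρ₁]
    (hf₀ : Integrable f γ₀) (hf₁ : Integrable f γ₁) {s t : ℝ} (hs : 0 ≤ s) (ht : 0 ≤ t)
    (hst : s + t = 1) :
    ((∫ x, f x ∂(ENNReal.ofReal s • γ₀ + ENNReal.ofReal t • γ₁) : ℝ) : EReal)
        + (τ : EReal) * relEnt (ENNReal.ofReal s • γ₀ + ENNReal.ofReal t • γ₁)
          (ENNReal.ofReal s • ρ₀ + ENNReal.ofReal t • ρ₁)
      ≤ (s : EReal) * (((∫ x, f x ∂γ₀ : ℝ) : EReal) + (τ : EReal) * relEnt γ₀ ρ₀)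
        + (t : EReal) * (((∫ x, f x ∂γ₁ : ℝ) : EReal) + (τ : EReal) * relEnt γ₁ ρ₁) := by
  have hst' := ofReal_add_ofReal_eq_one hs ht hst
  have := isProbabilityMeasure_smul_add_smul γ₀ γ₁ hst'
  have := isProbabilityMeasure_smul_add_smul ρ₀ ρ₁ hst'
  have hτ' : (τ : EReal) = (ENNReal.ofReal τ : EReal) := by
    rw [EReal.coe_ennreal_ofReal, max_eq_left hτ]
  have hint : ∫ x, f x ∂(ENNReal.ofReal s • γ₀ + ENNReal.ofReal t • γ₁)
      = s * ∫ x, f x ∂γ₀ + t * ∫ x, f x ∂γ₁ := by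
    rw [integral_add_measure (hf₀.smul_measure ENNReal.ofReal_ne_top)
      (hf₁.smul_measure ENNReal.ofReal_ne_top), integral_smul_measure, integral_smul_measure,
      ENNReal.toReal_ofReal hs, ENNReal.toReal_ofReal ht, smul_eq_mul, smul_eq_mul]
  have hkl := mul_le_mul_right (klDiv_smul_add_smul_le γ₀ γ₁ ρ₀ ρ₁ hst') (ENNReal.ofReal τ)
  simp only [relEnt_eq_klDiv, hτ', ← EReal.coe_ennreal_mul, EReal.coe_mul_add_coe_ennreal hs,
    EReal.coe_mul_add_coe_ennreal ht, hint]
  rw [add_add_add_comm, ← EReal.coe_add, ← EReal.coe_ennreal_add]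
  refine add_le_add le_rfl (EReal.coe_ennreal_le_coe_ennreal_iff.2 (hkl.trans_eq ?_))
  ring

end Divergence

section Coupling

variable {α : Type*} [MeasurableSpace α] {c : α × α → ℝ} {τ : ℝ}

lemma integrable_of_ae_mem_isCompact [TopologicalSpace α] [OpensMeasurableSpace α] {K : Set α}
    {f : α → ℝ} {μ : Measure α} [IsFiniteMeasure μ] (hK : IsCompact K) (hf : Continuous f)
    (h : ∀ᵐ x ∂μ, x ∈ K) : Integrable f μ := by
  obtain ⟨M, hM⟩ := hK.exists_bound_of_continuousOn hf.continuousOn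
  exact Integrable.mono' (integrable_const M) hf.aestronglyMeasurable
    (by filter_upwards [h] with x hx using hM x hx)

lemma isProbabilityMeasure_of_map_fst {γ : Measure (α × α)} {μ : Measure α}
    [IsProbabilityMeasure μ] (h : γ.map Prod.fst = μ) : IsProbabilityMeasure γ := by
  have : IsProbabilityMeasure (γ.map Prod.fst) := h ▸ inferInstance
  exact Measure.isProbabilityMeasure_of_map Prod.fst

lemma ae_mem_prod_of_map {γ : Measure (α × α)} {μ ν : Measure α} {X : Set α}
    (h₁ : γ.map Prod.fst = μ) (h₂ : γ.map Prod.snd = ν) (hμ : μ Xᶜ = 0) (hν : ν Xᶜ = 0) :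
    ∀ᵐ q ∂γ, q ∈ X ×ˢ X := by
  have h₁' : γ (Prod.fst ⁻¹' Xᶜ) = 0 :=
    le_antisymm ((Measure.le_map_apply measurable_fst.aemeasurable _).trans (h₁ ▸ hμ).le) bot_le
  have h₂' : γ (Prod.snd ⁻¹' Xᶜ) = 0 :=
    le_antisymm ((Measure.le_map_apply measurable_snd.aemeasurable _).trans (h₂ ▸ hν).le) bot_le
  filter_upwards [measure_eq_zero_iff_ae_notMem.1 h₁', measure_eq_zero_iff_ae_notMem.1 h₂']
    with q hq₁ hq₂
  simpa using And.intro hq₁ hq₂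

lemma EOT_le_of_map {μ ν : Measure α} {γ : Measure (α × α)} (h₁ : γ.map Prod.fst = μ)
    (h₂ : γ.map Prod.snd = ν) :
    EOT c τ μ ν ≤ ((∫ q, c q ∂γ : ℝ) : EReal) + (τ : EReal) * relEnt γ (μ.prod ν) :=
  iInf_le (fun γ : {γ : Measure (α × α) // γ.map Prod.fst = μ ∧ γ.map Prod.snd = ν} =>
    ((∫ q, c q ∂(γ : Measure (α × α)) : ℝ) : EReal)
      + (τ : EReal) * relEnt (γ : Measure (α × α)) (μ.prod ν)) ⟨γ, h₁, h₂⟩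

lemma exists_map_lt_of_EOT_lt {μ ν : Measure α} {r : EReal} (h : EOT c τ μ ν < r) :
    ∃ γ : Measure (α × α), γ.map Prod.fst = μ ∧ γ.map Prod.snd = ν ∧
      ((∫ q, c q ∂γ : ℝ) : EReal) + (τ : EReal) * relEnt γ (μ.prod ν) < r := by
  obtain ⟨⟨γ, h₁, h₂⟩, hγ⟩ := iInf_lt_iff.1 h
  exact ⟨γ, h₁, h₂, hγ⟩

lemma EOT_ne_top (c : α × α → ℝ) (τ : ℝ) (μ ν : Measure α) [IsProbabilityMeasure μ]
    [IsProbabilityMeasure ν] : EOT c τ μ ν ≠ ⊤ := by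
  refine ne_top_of_le_ne_top ?_ (EOT_le_of_map (γ := μ.prod ν) (by simp) (by simp))
  rw [relEnt_eq_klDiv, klDiv_self]
  simp

lemma EOT_ne_bot [TopologicalSpace α] {X : Set α} (hX : IsCompact X) (hc : Continuous c)
    (hτ : 0 ≤ τ) {μ ν : Measure α} [IsProbabilityMeasure μ] [IsProbabilityMeasure ν]
    (hμ : μ Xᶜ = 0) (hν : ν Xᶜ = 0) : EOT c τ μ ν ≠ ⊥ := by
  obtain ⟨M, hM⟩ := (hX.prod hX).exists_bound_of_continuousOn hc.continuousOn
  refine ne_bot_of_le_ne_bot (EReal.coe_ne_bot (-M)) (le_iInf fun ⟨γ, h₁, h₂⟩ => ?_)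
  have := isProbabilityMeasure_of_map_fst h₁
  have hcost : -M ≤ ∫ q, c q ∂γ := by
    have h := norm_integral_le_of_norm_le_const (μ := γ)
      (by filter_upwards [ae_mem_prod_of_map h₁ h₂ hμ hν] with q hq using hM q hq)
    rw [probReal_univ, mul_one, Real.norm_eq_abs] at h
    exact neg_le_of_abs_le h
  have hent : 0 ≤ (τ : EReal) * relEnt γ (μ.prod ν) := by
    rw [relEnt_eq_klDiv]
    exact mul_nonneg (EReal.coe_nonneg.2 hτ) (EReal.coe_ennreal_nonneg _)
  calc ((-M : ℝ) : EReal) = ((-M : ℝ) : EReal) + 0 := (add_zero _).symm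
    _ ≤ _ := add_le_add (EReal.coe_le_coe_iff.2 hcost) hent

lemma EOT_comp_swap_le (hτ : 0 ≤ τ) (μ ν : Measure α) [IsProbabilityMeasure μ]
    [IsProbabilityMeasure ν] : EOT (c ∘ Prod.swap) τ ν μ ≤ EOT c τ μ ν := by
  refine le_iInf fun ⟨γ, h₁, h₂⟩ => ?_
  have := isProbabilityMeasure_of_map_fst h₁
  refine (EOT_le_of_map (γ := γ.map Prod.swap)
    (by rwa [Measure.map_map measurable_fst measurable_swap])
    (by rwa [Measure.map_map measurable_snd measurable_swap])).trans ?_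
  have hcost : ∫ q, (c ∘ Prod.swap) q ∂(γ.map Prod.swap) = ∫ q, c q ∂γ := by
    exact integral_map_equiv (μ := γ) MeasurableEquiv.prodComm (c ∘ Prod.swap)
  have hent : relEnt (γ.map Prod.swap) (ν.prod μ) ≤ relEnt γ (μ.prod ν) := by
    rw [← Measure.prod_swap]
    exact relEnt_map_le γ (μ.prod ν) measurable_swap
  rw [hcost]
  exact add_le_add le_rfl (mul_le_mul_of_nonneg_left hent (EReal.coe_nonneg.2 hτ))

lemma EOT_comp_swap (hτ : 0 ≤ τ) (μ ν : Measure α) [IsProbabilityMeasure μ]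
    [IsProbabilityMeasure ν] : EOT c τ μ ν = EOT (c ∘ Prod.swap) τ ν μ := by
  refine le_antisymm ?_ (EOT_comp_swap_le hτ μ ν)
  simpa [Function.comp_assoc] using EOT_comp_swap_le (c := c ∘ Prod.swap) hτ ν μ

lemma EOT_smul_add_smul_le_of_map [TopologicalSpace α] [OpensMeasurableSpace α]
    [SecondCountableTopology α] {X : Set α} (hX : IsCompact X) (hc : Continuous c)
    (hτ : 0 ≤ τ) {μ₀ μ₁ ν : Measure α} [IsProbabilityMeasure μ₀] [IsProbabilityMeasure μ₁]
    [IsProbabilityMeasure ν] (hμ₀ : μ₀ Xᶜ = 0) (hμ₁ : μ₁ Xᶜ = 0) (hν : ν Xᶜ = 0)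
    {γ₀ γ₁ : Measure (α × α)} (hγ₀₁ : γ₀.map Prod.fst = μ₀) (hγ₀₂ : γ₀.map Prod.snd = ν)
    (hγ₁₁ : γ₁.map Prod.fst = μ₁) (hγ₁₂ : γ₁.map Prod.snd = ν) {s t : ℝ} (hs : 0 ≤ s)
    (ht : 0 ≤ t) (hst : s + t = 1) :
    EOT c τ (ENNReal.ofReal s • μ₀ + ENNReal.ofReal t • μ₁) ν
      ≤ (s : EReal) * (((∫ q, c q ∂γ₀ : ℝ) : EReal) + (τ : EReal) * relEnt γ₀ (μ₀.prod ν))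
        + (t : EReal) * (((∫ q, c q ∂γ₁ : ℝ) : EReal) + (τ : EReal) * relEnt γ₁ (μ₁.prod ν)) := by
  have := isProbabilityMeasure_of_map_fst hγ₀₁
  have := isProbabilityMeasure_of_map_fst hγ₁₁
  have hfst : (ENNReal.ofReal s • γ₀ + ENNReal.ofReal t • γ₁).map Prod.fst
      = ENNReal.ofReal s • μ₀ + ENNReal.ofReal t • μ₁ := by
    rw [Measure.map_add _ _ measurable_fst, Measure.map_smul, Measure.map_smul, hγ₀₁, hγ₁₁]
  have hsnd : (ENNReal.ofReal s • γ₀ + ENNReal.ofReal t • γ₁).map Prod.snd = ν := by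
    rw [Measure.map_add _ _ measurable_snd, Measure.map_smul, Measure.map_smul, hγ₀₂, hγ₁₂,
      ← add_smul, ofReal_add_ofReal_eq_one hs ht hst, one_smul]
  have hprod : (ENNReal.ofReal s • μ₀ + ENNReal.ofReal t • μ₁).prod ν
      = ENNReal.ofReal s • μ₀.prod ν + ENNReal.ofReal t • μ₁.prod ν := by
    rw [Measure.add_prod, Measure.prod_smul_left, Measure.prod_smul_left]
  refine (EOT_le_of_map hfst hsnd).trans ?_
  rw [hprod]
  exact integral_add_mul_relEnt_smul_add_smul_le hτ
    (integrable_of_ae_mem_isCompact (hX.prod hX) hc (ae_mem_prod_of_map hγ₀₁ hγ₀₂ hμ₀ hν))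
    (integrable_of_ae_mem_isCompact (hX.prod hX) hc (ae_mem_prod_of_map hγ₁₁ hγ₁₂ hμ₁ hν))
    hs ht hst

theorem EOT_smul_add_smul_left_le [TopologicalSpace α] [OpensMeasurableSpace α]
    [SecondCountableTopology α] {X : Set α} (hX : IsCompact X) (hc : Continuous c)
    (hτ : 0 ≤ τ) {μ₀ μ₁ ν : Measure α} [IsProbabilityMeasure μ₀] [IsProbabilityMeasure μ₁]
    [IsProbabilityMeasure ν] (hμ₀ : μ₀ Xᶜ = 0) (hμ₁ : μ₁ Xᶜ = 0) (hν : ν Xᶜ = 0) {s t : ℝ}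
    (hs : 0 ≤ s) (ht : 0 ≤ t) (hst : s + t = 1) :
    EOT c τ (ENNReal.ofReal s • μ₀ + ENNReal.ofReal t • μ₁) ν
      ≤ (s : EReal) * EOT c τ μ₀ ν + (t : EReal) * EOT c τ μ₁ ν := by
  lift EOT c τ μ₀ ν to ℝ using ⟨EOT_ne_top c τ μ₀ ν, EOT_ne_bot hX hc hτ hμ₀ hν⟩ with a ha
  lift EOT c τ μ₁ ν to ℝ using ⟨EOT_ne_top c τ μ₁ ν, EOT_ne_bot hX hc hτ hμ₁ hν⟩ with b hb
  refine EReal.le_of_forall_lt_iff_le.1 fun z hz => ?_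
  set ε := z - (s * a + t * b)
  have hε : 0 < ε := sub_pos.2 (by exact_mod_cast hz)
  obtain ⟨γ₀, hγ₀₁, hγ₀₂, hγ₀⟩ := exists_map_lt_of_EOT_lt
    (ha ▸ EReal.coe_lt_coe_iff.2 (lt_add_of_pos_right a hε) : EOT c τ μ₀ ν < ↑(a + ε))
  obtain ⟨γ₁, hγ₁₁, hγ₁₂, hγ₁⟩ := exists_map_lt_of_EOT_lt
    (hb ▸ EReal.coe_lt_coe_iff.2 (lt_add_of_pos_right b hε) : EOT c τ μ₁ ν < ↑(b + ε))
  calc EOT c τ (ENNReal.ofReal s • μ₀ + ENNReal.ofReal t • μ₁) ν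
      ≤ (s : EReal) * (((∫ q, c q ∂γ₀ : ℝ) : EReal) + (τ : EReal) * relEnt γ₀ (μ₀.prod ν))
        + (t : EReal) * (((∫ q, c q ∂γ₁ : ℝ) : EReal) + (τ : EReal) * relEnt γ₁ (μ₁.prod ν)) :=
      EOT_smul_add_smul_le_of_map hX hc hτ hμ₀ hμ₁ hν hγ₀₁ hγ₀₂ hγ₁₁ hγ₁₂ hs ht hst
    _ ≤ (s : EReal) * ↑(a + ε) + (t : EReal) * ↑(b + ε) :=
      add_le_add (mul_le_mul_of_nonneg_left hγ₀.le (EReal.coe_nonneg.2 hs))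
        (mul_le_mul_of_nonneg_left hγ₁.le (EReal.coe_nonneg.2 ht))
    _ = z := by
      norm_cast
      linear_combination ε * hst

end Coupling

theorem stmt_6_general {d : ℕ} (X : Set (Pt d)) (hXc : IsCompact X)
    (c : Pt d × Pt d → ℝ) (hc : Continuous c) (τ : ℝ) (hτ : 0 < τ)
    (μ₀ μ₁ ν : Measure (Pt d))
    [IsProbabilityMeasure μ₀] [IsProbabilityMeasure μ₁] [IsProbabilityMeasure ν]
    (hμ₀X : μ₀ Xᶜ = 0) (hμ₁X : μ₁ Xᶜ = 0) (hνX : ν Xᶜ = 0)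
    (t : ℝ) (ht : t ∈ Icc (0 : ℝ) 1) :
    EOT c τ (ENNReal.ofReal (1 - t) • μ₀ + ENNReal.ofReal t • μ₁) ν
      ≤ ((1 - t : ℝ) : EReal) * EOT c τ μ₀ ν + (t : EReal) * EOT c τ μ₁ ν ∧
    EOT c τ ν (ENNReal.ofReal (1 - t) • μ₀ + ENNReal.ofReal t • μ₁)
      ≤ ((1 - t : ℝ) : EReal) * EOT c τ ν μ₀ + (t : EReal) * EOT c τ ν μ₁ := by
  have hs : 0 ≤ 1 - t := sub_nonneg.2 ht.2
  have hst : 1 - t + t = 1 := sub_add_cancel 1 t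
  have := isProbabilityMeasure_smul_add_smul μ₀ μ₁ (ofReal_add_ofReal_eq_one hs ht.1 hst)
  refine ⟨EOT_smul_add_smul_left_le hXc hc hτ.le hμ₀X hμ₁X hνX hs ht.1 hst, ?_⟩
  rw [EOT_comp_swap hτ.le, EOT_comp_swap hτ.le ν μ₀, EOT_comp_swap hτ.le ν μ₁]
  exact EOT_smul_add_smul_left_le hXc (hc.comp continuous_swap) hτ.le hμ₀X hμ₁X hνX hs ht.1 hst

/-- the entropic optimal transport cost `T_τ` is convex separately in each of
its two arguments. -/
theorem stmt_6 {d : ℕ} (X : Set (Pt d)) (hXc : IsCompact X) (hXne : X.Nonempty)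
    (c : Pt d × Pt d → ℝ) (hc : Continuous c) (τ : ℝ) (hτ : 0 < τ)
    (μ₀ μ₁ ν : Measure (Pt d))
    [IsProbabilityMeasure μ₀] [IsProbabilityMeasure μ₁] [IsProbabilityMeasure ν]
    (hμ₀X : μ₀ Xᶜ = 0) (hμ₁X : μ₁ Xᶜ = 0) (hνX : ν Xᶜ = 0)
    (t : ℝ) (ht : t ∈ Icc (0 : ℝ) 1) :
    EOT c τ (ENNReal.ofReal (1 - t) • μ₀ + ENNReal.ofReal t • μ₁) ν
      ≤ ((1 - t : ℝ) : EReal) * EOT c τ μ₀ ν + (t : EReal) * EOT c τ μ₁ ν ∧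
    EOT c τ ν (ENNReal.ofReal (1 - t) • μ₀ + ENNReal.ofReal t • μ₁)
      ≤ ((1 - t : ℝ) : EReal) * EOT c τ ν μ₀ + (t : EReal) * EOT c τ ν μ₁ :=
  stmt_6_general X hXc c hc τ hτ μ₀ μ₁ ν hμ₀X hμ₁X hνX t ht
end

section
/- Let λ denote Lebesgue measure on ℝ^d, let R, μ̂ ∈ P(X), and suppose μ̂ is absolutely continuous with respect to λ with density ρ satisfying ∫ |log ρ| dμ̂ < ∞. Then Fit_σ(R|μ̂) = H(μ̂ | (g_σ ∗ R)·λ) − ∫ log ρ dμ̂ − (d/2) log(2πσ²), where (g_σ ∗ R)(y) := ∫_X g_σ(y − x) dR(x) is the density of the convolution of R with the Gaussian, and (g_σ ∗ R)·λ denotes the probability measure on ℝ^d with this density with respect to λ. -/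
open MeasureTheory Real Set

-- Data-fitting functional `Fit_σ(R|μ̂) = ∫ -log (∫ exp(-‖x-y‖²/(2σ²)) dR(x)) dμ̂(y)`.
noncomputable def Fitf {d : ℕ} (σ : ℝ) (R μhat : Measure (Pt d)) : ℝ :=
  ∫ y, -Real.log (∫ x, Real.exp (-‖x - y‖ ^ 2 / (2 * σ ^ 2)) ∂ R) ∂μhat

-- The Gaussian density `g_σ(x) = (2πσ²)^{-d/2} exp(-‖x‖²/(2σ²))` on `ℝ^d`.
noncomputable def gauss (d : ℕ) (σ : ℝ) (x : Pt d) : ℝ :=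
  (2 * π * σ ^ 2) ^ (-(d : ℝ) / 2) * Real.exp (-‖x‖ ^ 2 / (2 * σ ^ 2))

/-- if `μ̂ ≪ λ` has density `ρ` with `∫ |log ρ| dμ̂ < ∞`, then
`Fit_σ(R|μ̂) = H(μ̂ | (g_σ ∗ R)·λ) − ∫ log ρ dμ̂ − (d/2) log(2πσ²)`. -/
theorem stmt_12 {d : ℕ} (X : Set (Pt d)) (hXc : IsCompact X) (hXne : X.Nonempty)
    (σ : ℝ) (hσ : 0 < σ)
    (R μhat : Measure (Pt d)) [IsProbabilityMeasure R] [IsProbabilityMeasure μhat]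
    (hRX : R Xᶜ = 0) (hμhatX : μhat Xᶜ = 0)
    (ρ : Pt d → ℝ) (hρm : Measurable ρ) (hρ0 : ∀ x, 0 ≤ ρ x)
    (hμhat : μhat = volume.withDensity (fun x => ENNReal.ofReal (ρ x)))
    (hlog : Integrable (fun x => Real.log (ρ x)) μhat) :
    ((Fitf σ R μhat : ℝ) : EReal)
      = relEnt μhat
          (volume.withDensity (fun y => ENNReal.ofReal (∫ x, gauss d σ (y - x) ∂ R)))
        - ((∫ x, Real.log (ρ x) ∂μhat : ℝ) : EReal)
        - (((d : ℝ) / 2 * Real.log (2 * π * σ ^ 2) : ℝ) : EReal) := by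
  -- basic positivity
  have h2σ : (0:ℝ) < 2 * σ ^ 2 := by positivity
  have hbase : (0:ℝ) < 2 * π * σ ^ 2 := by positivity
  set c : ℝ := (2 * π * σ ^ 2) ^ (-(d : ℝ) / 2) with hc
  have hcpos : 0 < c := Real.rpow_pos_of_pos hbase _
  -- a bound on X
  obtain ⟨C, hXC⟩ := hXc.isBounded.exists_norm_le
  obtain ⟨x0, hx0⟩ := hXne
  have hC0 : 0 ≤ C := le_trans (norm_nonneg x0) (hXC x0 hx0)
  have hneg : ∀ t : ℝ, -t ^ 2 / (2 * σ ^ 2) ≤ 0 := fun t =>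
    div_nonpos_of_nonpos_of_nonneg (by nlinarith [sq_nonneg t]) h2σ.le
  -- the inner integral
  set f : Pt d → ℝ := fun y => ∫ x, Real.exp (-‖x - y‖ ^ 2 / (2 * σ ^ 2)) ∂ R with hf
  -- measurability of f
  have hfsm : StronglyMeasurable f := by
    have hcont : Continuous (fun p : Pt d × Pt d =>
        Real.exp (-‖p.1 - p.2‖ ^ 2 / (2 * σ ^ 2))) :=
      Real.continuous_exp.comp
        ((((continuous_fst.sub continuous_snd).norm.pow 2).neg).div_const _)
    exact hcont.stronglyMeasurable.integral_prod_left'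
  have hfm : Measurable f := hfsm.measurable
  -- integrand integrability and bounds
  have hint : ∀ y : Pt d, Integrable (fun x => Real.exp (-‖x - y‖ ^ 2 / (2 * σ ^ 2))) R := by
    intro y
    refine (integrable_const (1:ℝ)).mono' ?_ ?_
    · exact (Real.continuous_exp.comp
        ((((continuous_id.sub continuous_const).norm.pow 2).neg).div_const _)).aestronglyMeasurable
    · filter_upwards with x
      rw [Real.norm_of_nonneg (Real.exp_pos _).le]
      exact Real.exp_le_one_iff.2 (hneg _)
  have hfle1 : ∀ y, f y ≤ 1 := by
    intro y
    calc f y ≤ ∫ _x, (1:ℝ) ∂ R := by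
          refine integral_mono (hint y) (integrable_const 1) fun x => ?_
          exact Real.exp_le_one_iff.2 (hneg _)
      _ = 1 := by simp
  have hflb : ∀ y : Pt d, Real.exp (-(C + ‖y‖) ^ 2 / (2 * σ ^ 2)) ≤ f y := by
    intro y
    calc Real.exp (-(C + ‖y‖) ^ 2 / (2 * σ ^ 2))
        = ∫ _x, Real.exp (-(C + ‖y‖) ^ 2 / (2 * σ ^ 2)) ∂ R := by simp
      _ ≤ f y := by
          refine integral_mono_ae (integrable_const _) (hint y) ?_
          have hXae : ∀ᵐ x ∂ R, x ∈ X := by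
            rw [ae_iff]
            exact hRX
          filter_upwards [hXae] with x hx
          apply Real.exp_le_exp.2
          apply div_le_div_of_nonneg_right _ h2σ.le
          simp only [neg_le_neg_iff]
          have h1 : ‖x - y‖ ≤ C + ‖y‖ :=
            le_trans (norm_sub_le x y) (by linarith [hXC x hx])
          exact pow_le_pow_left₀ (norm_nonneg _) h1 2
  have hfpos : ∀ y, 0 < f y := fun y => lt_of_lt_of_le (Real.exp_pos _) (hflb y)
  -- rewrite the density of ν
  have hgauss_int : ∀ y : Pt d, (∫ x, gauss d σ (y - x) ∂ R) = c * f y := by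
    intro y
    have : (fun x => gauss d σ (y - x)) =
        fun x => c * Real.exp (-‖x - y‖ ^ 2 / (2 * σ ^ 2)) := by
      funext x
      simp only [gauss, hc, norm_sub_rev y x]
    rw [this, integral_const_mul]
  set q : Pt d → ENNReal := fun y => ENNReal.ofReal (c * f y) with hq
  have hqm : Measurable q := (measurable_const.mul hfm).ennreal_ofReal
  have hq0 : ∀ y, q y ≠ 0 := by
    intro y
    simp only [hq, ne_eq, ENNReal.ofReal_eq_zero, not_le]
    exact mul_pos hcpos (hfpos y)
  have hqt : ∀ y, q y ≠ ⊤ := fun y => ENNReal.ofReal_ne_top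
  set ν : Measure (Pt d) :=
    volume.withDensity (fun y => ENNReal.ofReal (∫ x, gauss d σ (y - x) ∂ R)) with hν
  have hνq : ν = volume.withDensity q := by
    rw [hν]
    congr 1
    funext y
    rw [hgauss_int y]
  -- μhat as a density against ν
  set r : Pt d → ENNReal := fun y => ENNReal.ofReal (ρ y) / q y with hr
  have hrm : Measurable r := (hρm.ennreal_ofReal).div hqm
  have hkey : μhat = ν.withDensity r := by
    rw [hνq, ← withDensity_mul volume hqm hrm, hμhat]
    congr 1
    funext y
    show ENNReal.ofReal (ρ y) = q y * r y
    rw [hr]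
    exact (ENNReal.mul_div_cancel (hq0 y) (hqt y)).symm
  have habs : μhat ≪ ν := hkey ▸ withDensity_absolutelyContinuous ν r
  have hsf : SigmaFinite ν := by
    rw [hνq, hq]
    infer_instance
  have hrn : μhat.rnDeriv ν =ᵐ[ν] r := by
    rw [hkey]
    exact Measure.rnDeriv_withDensity ν hrm
  have hrnμ : μhat.rnDeriv ν =ᵐ[μhat] r := habs.ae_le hrn
  -- ρ is positive μhat-a.e.
  have hρpos : ∀ᵐ y ∂μhat, 0 < ρ y := by
    rw [ae_iff]
    have hset : {y | ¬ 0 < ρ y} = {y | ρ y = 0} := by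
      ext y
      simp only [mem_setOf_eq, not_lt]
      constructor
      · intro h; exact le_antisymm h (hρ0 y)
      · intro h; exact h.le
    have hms : MeasurableSet {y | ρ y = 0} := hρm (measurableSet_singleton 0)
    rw [hset, hμhat, withDensity_apply (fun x => ENNReal.ofReal (ρ x)) hms]
    have hle : ∫⁻ x in {y | ρ y = 0}, ENNReal.ofReal (ρ x) ∂volume
        = ∫⁻ _x in {y | ρ y = 0}, (0 : ENNReal) ∂volume :=
      setLIntegral_congr_fun hms (fun y hy => by
        simp only [mem_setOf_eq] at hy
        simp [hy])
    rw [hle]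
    simp
  have hXae : ∀ᵐ y ∂μhat, y ∈ X := by
    rw [ae_iff]; exact hμhatX
  -- the key a.e. identity for the log of the RN derivative
  have haeeq : ∀ᵐ y ∂μhat,
      Real.log ((μhat.rnDeriv ν y).toReal)
        = Real.log (ρ y) - Real.log c - Real.log (f y) := by
    filter_upwards [hrnμ, hρpos] with y hy hyρ
    rw [hy]
    have htoReal : (r y).toReal = ρ y / (c * f y) := by
      rw [hr]
      rw [ENNReal.toReal_div, ENNReal.toReal_ofReal (hρ0 y),
        hq, ENNReal.toReal_ofReal (mul_pos hcpos (hfpos y)).le]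
    rw [htoReal, Real.log_div (ne_of_gt hyρ) (mul_pos hcpos (hfpos y)).ne',
      Real.log_mul (ne_of_gt hcpos) (ne_of_gt (hfpos y))]
    ring
  -- integrability of log ∘ f w.r.t. μhat
  have hlogf_int : Integrable (fun y => Real.log (f y)) μhat := by
    refine (integrable_const ((C + C) ^ 2 / (2 * σ ^ 2))).mono' ?_ ?_
    · exact (hfm.log).aestronglyMeasurable
    · filter_upwards [hXae] with y hy
      rw [Real.norm_eq_abs, abs_le]
      constructor
      · have h1 : Real.exp (-(C + C) ^ 2 / (2 * σ ^ 2)) ≤ f y := by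
          refine le_trans ?_ (hflb y)
          apply Real.exp_le_exp.2
          apply div_le_div_of_nonneg_right _ h2σ.le
          simp only [neg_le_neg_iff]
          have : ‖y‖ ≤ C := hXC y hy
          have h0 : 0 ≤ C + ‖y‖ := by positivity
          nlinarith
        have := Real.log_le_log (Real.exp_pos _) h1
        rw [Real.log_exp, neg_div] at this
        linarith [this]
      · have := Real.log_nonpos (hfpos y).le (hfle1 y)
        have hCσ : 0 ≤ (C + C) ^ 2 / (2 * σ ^ 2) := by positivity
        linarith
  have h1 : Integrable (fun y => Real.log (ρ y) - Real.log c) μhat :=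
    hlog.sub (integrable_const (Real.log c))
  have hglog_int : Integrable
      (fun y => Real.log (ρ y) - Real.log c - Real.log (f y)) μhat :=
    h1.sub hlogf_int
  have hrn_int : Integrable (fun y => Real.log ((μhat.rnDeriv ν y).toReal)) μhat :=
    hglog_int.congr (haeeq.mono fun y h => h.symm)
  -- compute relEnt
  have hrelEnt : relEnt μhat ν
      = ((∫ y, (Real.log (ρ y) - Real.log c - Real.log (f y)) ∂μhat : ℝ) : EReal) := by
    rw [relEnt, if_pos ⟨habs, hrn_int⟩]
    congr 1
    exact integral_congr_ae haeeq
  have hintsplit : ∫ y, (Real.log (ρ y) - Real.log c - Real.log (f y)) ∂μhat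
      = (∫ y, Real.log (ρ y) ∂μhat) - Real.log c - ∫ y, Real.log (f y) ∂μhat := by
    rw [integral_sub h1 hlogf_int, integral_sub hlog (integrable_const (Real.log c)),
      integral_const]
    simp
  have hFit : Fitf σ R μhat = - ∫ y, Real.log (f y) ∂μhat := by
    rw [Fitf, integral_neg]
  have hlogc : Real.log c = -((d : ℝ) / 2) * Real.log (2 * π * σ ^ 2) := by
    rw [hc, Real.log_rpow hbase]
    ring
  rw [hrelEnt, hintsplit]
  rw [show ((((∫ y, Real.log (ρ y) ∂μhat) - Real.log c - ∫ y, Real.log (f y) ∂μhat : ℝ)) : EReal)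
      - ((∫ x, Real.log (ρ x) ∂μhat : ℝ) : EReal)
      - (((d : ℝ) / 2 * Real.log (2 * π * σ ^ 2) : ℝ) : EReal)
    = ((((∫ y, Real.log (ρ y) ∂μhat) - Real.log c - ∫ y, Real.log (f y) ∂μhat)
        - (∫ x, Real.log (ρ x) ∂μhat)
        - ((d : ℝ) / 2 * Real.log (2 * π * σ ^ 2)) : ℝ) : EReal) by
    rw [← EReal.coe_sub, ← EReal.coe_sub]]
  rw [EReal.coe_eq_coe_iff]
  rw [hFit, hlogc]
  ring
end

section
/- For every μ̂ ∈ P(X) and σ > 0, the map R ↦ Fit_σ(R|μ̂) is continuous with respect to weak convergence of probability measures: if R_n → R weakly in P(X), then Fit_σ(R_n|μ̂) → Fit_σ(R|μ̂). -/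
open MeasureTheory Real Set Filter

/-! On a set of diameter `D` the Gaussian kernel is squeezed between `exp (-D² / (2σ²))` and `1`,
so for measures carried by a bounded set `X` the integrand `-log ∫ K(x, y) dR(x)` is bounded
uniformly in `R` for `y ∈ X`. Each inner integral converges by weak convergence, since the kernel
is bounded and continuous, and dominated convergence concludes. -/

open scoped Topology

namespace GaussKernel

variable {E : Type*} [SeminormedAddCommGroup E]

noncomputable def gaussKernel (σ : ℝ) (x y : E) : ℝ :=
  exp (-‖x - y‖ ^ 2 / (2 * σ ^ 2))

lemma gaussKernel_le_one (σ : ℝ) (x y : E) : gaussKernel σ x y ≤ 1 :=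
  exp_le_one_iff.2 <| div_nonpos_of_nonpos_of_nonneg (neg_nonpos.2 (by positivity)) (by positivity)

lemma exp_neg_sq_div_le_gaussKernel {σ D : ℝ} {x y : E} (h : ‖x - y‖ ≤ D) :
    exp (-D ^ 2 / (2 * σ ^ 2)) ≤ gaussKernel σ x y :=
  exp_le_exp.2 <| div_le_div_of_nonneg_right
    (neg_le_neg (pow_le_pow_left₀ (norm_nonneg _) h 2)) (by positivity)

lemma norm_gaussKernel_le_one (σ : ℝ) (x y : E) : ‖gaussKernel σ x y‖ ≤ 1 :=
  (Real.norm_of_nonneg (exp_pos _).le).trans_le (gaussKernel_le_one σ x y)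

@[fun_prop]
lemma continuous_gaussKernel (σ : ℝ) : Continuous fun p : E × E => gaussKernel σ p.1 p.2 := by
  unfold gaussKernel
  fun_prop

noncomputable def gaussKernelBCF (σ : ℝ) (y : E) : BoundedContinuousFunction E ℝ :=
  .ofNormedAddCommGroup (gaussKernel σ · y) (by fun_prop) 1
    (norm_gaussKernel_le_one σ · y)

variable [MeasurableSpace E] [OpensMeasurableSpace E]

lemma integrable_gaussKernel (σ : ℝ) (μ : Measure E) [IsFiniteMeasure μ] (y : E) :
    Integrable (gaussKernel σ · y) μ :=
  (gaussKernelBCF σ y).integrable μ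

noncomputable def gaussAvg (σ : ℝ) (μ : Measure E) (y : E) : ℝ :=
  ∫ x, gaussKernel σ x y ∂μ

lemma gaussAvg_le_one (σ : ℝ) (μ : Measure E) [IsProbabilityMeasure μ] (y : E) :
    gaussAvg σ μ y ≤ 1 := by
  simpa [gaussAvg] using integral_mono (integrable_gaussKernel σ μ y) (integrable_const 1)
    (gaussKernel_le_one σ · y)

lemma exp_neg_diam_sq_le_gaussAvg (σ : ℝ) {μ : Measure E} [IsProbabilityMeasure μ] {X : Set E}
    (hX : Bornology.IsBounded X) (hμX : μ Xᶜ = 0) {y : E} (hy : y ∈ X) :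
    exp (-Metric.diam X ^ 2 / (2 * σ ^ 2)) ≤ gaussAvg σ μ y := by
  have hbound : ∀ᵐ x ∂μ, exp (-Metric.diam X ^ 2 / (2 * σ ^ 2)) ≤ gaussKernel σ x y := by
    filter_upwards [mem_ae_iff.2 hμX] with x hx
    exact exp_neg_sq_div_le_gaussKernel (dist_eq_norm x y ▸ Metric.dist_le_diam_of_mem hX hx hy)
  simpa [gaussAvg] using
    integral_mono_ae (integrable_const _) (integrable_gaussKernel σ μ y) hbound

lemma abs_log_gaussAvg_le (σ : ℝ) {μ : Measure E} [IsProbabilityMeasure μ] {X : Set E}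
    (hX : Bornology.IsBounded X) (hμX : μ Xᶜ = 0) {y : E} (hy : y ∈ X) :
    |log (gaussAvg σ μ y)| ≤ Metric.diam X ^ 2 / (2 * σ ^ 2) := by
  have hlow := exp_neg_diam_sq_le_gaussAvg σ hX hμX hy
  have hlog_nonpos : log (gaussAvg σ μ y) ≤ 0 :=
    log_nonpos ((exp_pos _).le.trans hlow) (gaussAvg_le_one σ μ y)
  have hlog_ge := log_le_log (exp_pos _) hlow
  rw [log_exp, neg_div] at hlog_ge
  rw [abs_of_nonpos hlog_nonpos]
  linarith

lemma continuous_gaussAvg (σ : ℝ) (μ : Measure E) [IsFiniteMeasure μ] :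
    Continuous (gaussAvg σ μ) :=
  continuous_of_dominated (bound := fun _ => 1)
    (fun y => (gaussKernelBCF σ y).continuous.aestronglyMeasurable)
    (fun y => .of_forall (norm_gaussKernel_le_one σ · y))
    (integrable_const 1) (.of_forall fun x => by fun_prop)

theorem tendsto_integral_neg_log_gaussAvg {ι : Type*} {l : Filter ι} [l.IsCountablyGenerated]
    (σ : ℝ) {X : Set E} (hX : Bornology.IsBounded X) {ν : Measure E} [IsFiniteMeasure ν]
    (hνX : ν Xᶜ = 0) {μs : ι → Measure E} {μ : Measure E}
    (hμs : ∀ i, IsProbabilityMeasure (μs i)) [IsProbabilityMeasure μ]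
    (hμsX : ∀ i, μs i Xᶜ = 0) (hμX : μ Xᶜ = 0)
    (hweak : ∀ f : BoundedContinuousFunction E ℝ,
      Tendsto (fun i => ∫ x, f x ∂μs i) l (𝓝 (∫ x, f x ∂μ))) :
    Tendsto (fun i => ∫ y, -log (gaussAvg σ (μs i) y) ∂ν) l
      (𝓝 (∫ y, -log (gaussAvg σ μ y) ∂ν)) := by
  have hνae : ∀ᵐ y ∂ν, y ∈ X := mem_ae_iff.2 hνX
  refine tendsto_integral_filter_of_dominated_convergence
    (fun _ => Metric.diam X ^ 2 / (2 * σ ^ 2)) (.of_forall fun i => ?_)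
    (.of_forall fun i => ?_) (integrable_const _) ?_
  · exact (measurable_log.comp (continuous_gaussAvg σ (μs i)).measurable).neg
      |>.aestronglyMeasurable
  · filter_upwards [hνae] with y hy
    simpa using abs_log_gaussAvg_le σ hX (hμsX i) hy
  · filter_upwards [hνae] with y hy
    have hpos : 0 < gaussAvg σ μ y :=
      (exp_pos _).trans_le (exp_neg_diam_sq_le_gaussAvg σ hX hμX hy)
    exact ((continuousAt_log hpos.ne').tendsto.comp (hweak (gaussKernelBCF σ y))).neg

end GaussKernel

open GaussKernel in
theorem stmt_14_general {d : ℕ} (X : Set (Pt d)) (hXc : IsCompact X)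
    (μhat : Measure (Pt d)) [IsProbabilityMeasure μhat] (hμhatX : μhat Xᶜ = 0)
    (σ : ℝ)
    (Rs : ℕ → Measure (Pt d)) (R : Measure (Pt d))
    (hRsP : ∀ k, IsProbabilityMeasure (Rs k)) [IsProbabilityMeasure R]
    (hRsX : ∀ k, Rs k Xᶜ = 0) (hRX : R Xᶜ = 0)
    (hRw : ∀ f : BoundedContinuousFunction (Pt d) ℝ,
      Tendsto (fun k => ∫ x, f x ∂(Rs k)) atTop (nhds (∫ x, f x ∂ R))) :
    Tendsto (fun k => Fitf σ (Rs k) μhat) atTop (nhds (Fitf σ R μhat)) :=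
  -- `Fitf σ R μhat` is definitionally `∫ y, -log (gaussAvg σ R y) ∂μhat`.
  tendsto_integral_neg_log_gaussAvg σ hXc.isBounded hμhatX hRsP hRsX hRX hRw

/-- `R ↦ Fit_σ(R|μ̂)` is continuous with respect to weak convergence of
probability measures: if `R_n → R` weakly, then `Fit_σ(R_n|μ̂) → Fit_σ(R|μ̂)`. -/
theorem stmt_14 {d : ℕ} (X : Set (Pt d)) (hXc : IsCompact X) (hXne : X.Nonempty)
    (μhat : Measure (Pt d)) [IsProbabilityMeasure μhat] (hμhatX : μhat Xᶜ = 0)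
    (σ : ℝ) (hσ : 0 < σ)
    (Rs : ℕ → Measure (Pt d)) (R : Measure (Pt d))
    (hRsP : ∀ k, IsProbabilityMeasure (Rs k)) [IsProbabilityMeasure R]
    (hRsX : ∀ k, Rs k Xᶜ = 0) (hRX : R Xᶜ = 0)
    (hRw : ∀ f : BoundedContinuousFunction (Pt d) ℝ,
      Tendsto (fun k => ∫ x, f x ∂(Rs k)) atTop (nhds (∫ x, f x ∂ R))) :
    Tendsto (fun k => Fitf σ (Rs k) μhat) atTop (nhds (Fitf σ R μhat)) :=
  stmt_14_general X hXc μhat hμhatX σ Rs R hRsP hRsX hRX hRw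
end

section
/- Let μ, ν, μ̂ ∈ P(X) and σ > 0, and write k_σ(x,y) := exp(−‖x−y‖²/(2σ²)). Then the map ε ↦ Fit_σ((1−ε)μ + εν | μ̂) has a one-sided derivative at ε = 0⁺ given by the first-variation formula: lim_{ε→0⁺} ( Fit_σ((1−ε)μ + εν | μ̂) − Fit_σ(μ|μ̂) )/ε = − ∫_X ∫_X k_σ(x,y) / ( ∫_X k_σ(x',y) dμ(x') ) dμ̂(y) d(ν−μ)(x), i.e. it equals ∫ V(x) d(ν−μ)(x) with V(x) := − ∫_X k_σ(x,y)/(∫_X k_σ(x',y) dμ(x')) dμ̂(y). -/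
open MeasureTheory Real Set Filter

-- The Gaussian kernel `k_σ(x,y) = exp(-‖x-y‖²/(2σ²))`.
noncomputable def ker {d : ℕ} (σ : ℝ) (x y : Pt d) : ℝ :=
  Real.exp (-‖x - y‖ ^ 2 / (2 * σ ^ 2))

lemma ker_pos {d : ℕ} (σ : ℝ) (x y : Pt d) : 0 < ker σ x y := Real.exp_pos _

lemma ker_le_one {d : ℕ} {σ : ℝ} (hσ : 0 < σ) (x y : Pt d) : ker σ x y ≤ 1 := by
  rw [_root_.ker, Real.exp_le_one_iff]
  apply div_nonpos_of_nonpos_of_nonneg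
  · exact neg_nonpos.2 (by positivity)
  · positivity

lemma ker_continuous {d : ℕ} (σ : ℝ) : Continuous fun p : Pt d × Pt d => ker σ p.1 p.2 := by
  unfold _root_.ker; fun_prop

lemma ker_continuous' {d : ℕ} (σ : ℝ) (x : Pt d) : Continuous fun y : Pt d => ker σ x y := by
  unfold _root_.ker; fun_prop

lemma ker_continuous'' {d : ℕ} (σ : ℝ) (y : Pt d) : Continuous fun x : Pt d => ker σ x y := by
  unfold _root_.ker; fun_prop

lemma ker_integrable {d : ℕ} {σ : ℝ} (hσ : 0 < σ) (m : Measure (Pt d)) [IsFiniteMeasure m]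
    (y : Pt d) : Integrable (fun x => ker σ x y) m := by
  refine Integrable.mono' (integrable_const 1) ?_ ?_
  · exact (ker_continuous'' σ y).aestronglyMeasurable
  · filter_upwards with x
    rw [Real.norm_eq_abs, abs_of_pos (ker_pos σ x y)]
    exact ker_le_one hσ x y

lemma ker_integral_pos {d : ℕ} {σ : ℝ} (hσ : 0 < σ) (m : Measure (Pt d))
    [IsProbabilityMeasure m] (y : Pt d) : 0 < ∫ x, ker σ x y ∂m := by
  rw [integral_pos_iff_support_of_nonneg (fun x => (ker_pos σ x y).le) (ker_integrable hσ m y)]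
  have : Function.support (fun x => ker σ x y) = univ :=
    eq_univ_of_forall fun x => (ker_pos σ x y).ne'
  rw [this]
  simp

lemma ker_integral_le_one {d : ℕ} {σ : ℝ} (hσ : 0 < σ) (m : Measure (Pt d))
    [IsProbabilityMeasure m] (y : Pt d) : ∫ x, ker σ x y ∂m ≤ 1 := by
  calc ∫ x, ker σ x y ∂m ≤ ∫ _, (1 : ℝ) ∂m :=
        integral_mono (ker_integrable hσ m y) (integrable_const 1) (fun x => ker_le_one hσ x y)
    _ = 1 := by simp

/-- the one-sided derivative of `ε ↦ Fit_σ((1-ε)μ + εν | μ̂)` at `ε = 0⁺`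
equals `∫ V d(ν−μ)` with first variation
`V(x) = -∫ k_σ(x,y) / (∫ k_σ(x',y) dμ(x')) dμ̂(y)`. -/
theorem stmt_15 {d : ℕ} (X : Set (Pt d)) (hXc : IsCompact X) (hXne : X.Nonempty)
    (μ ν μhat : Measure (Pt d))
    [IsProbabilityMeasure μ] [IsProbabilityMeasure ν] [IsProbabilityMeasure μhat]
    (hμX : μ Xᶜ = 0) (hνX : ν Xᶜ = 0) (hμhatX : μhat Xᶜ = 0)
    (σ : ℝ) (hσ : 0 < σ)
    (V : Pt d → ℝ)
    (hV : ∀ x, V x = -∫ y, ker σ x y / (∫ x', ker σ x' y ∂μ) ∂μhat) :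
    Tendsto
      (fun ε : ℝ =>
        (Fitf σ (ENNReal.ofReal (1 - ε) • μ + ENNReal.ofReal ε • ν) μhat
          - Fitf σ μ μhat) / ε)
      (nhdsWithin 0 (Ioi 0))
      (nhds (∫ x, V x ∂ν - ∫ x, V x ∂μ)) := by
  classical
  set a : Pt d → ℝ := fun y => ∫ x, ker σ x y ∂μ with ha_def
  set b : Pt d → ℝ := fun y => ∫ x, ker σ x y ∂ν with hb_def
  -- a bounded region containing X
  obtain ⟨R, hXR⟩ := hXc.isBounded.subset_closedBall 0
  have hR0 : 0 ≤ R := by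
    obtain ⟨x, hx⟩ := hXne
    have := hXR hx
    simp only [Metric.mem_closedBall, dist_zero_right] at this
    exact le_trans (norm_nonneg x) this
  set c₀ : ℝ := Real.exp (-(2 * R) ^ 2 / (2 * σ ^ 2)) with hc0_def
  have hc0 : 0 < c₀ := Real.exp_pos _
  have hc0le1 : c₀ ≤ 1 := by
    rw [hc0_def, Real.exp_le_one_iff]
    apply div_nonpos_of_nonpos_of_nonneg
    · exact neg_nonpos.2 (by positivity)
    · positivity
  -- continuity of a, b
  have hacont : Continuous a := by
    refine continuous_of_dominated (bound := fun _ => 1) ?_ ?_ (integrable_const 1) ?_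
    · exact fun y => (ker_continuous'' σ y).aestronglyMeasurable
    · intro y
      filter_upwards with x
      rw [Real.norm_eq_abs, abs_of_pos (ker_pos σ x y)]
      exact ker_le_one hσ x y
    · filter_upwards with x
      exact ker_continuous' σ x
  have hbcont : Continuous b := by
    refine continuous_of_dominated (bound := fun _ => 1) ?_ ?_ (integrable_const 1) ?_
    · exact fun y => (ker_continuous'' σ y).aestronglyMeasurable
    · intro y
      filter_upwards with x
      rw [Real.norm_eq_abs, abs_of_pos (ker_pos σ x y)]
      exact ker_le_one hσ x y
    · filter_upwards with x
      exact ker_continuous' σ x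
  have ha_pos : ∀ y, 0 < a y := fun y => ker_integral_pos hσ μ y
  have hb_pos : ∀ y, 0 < b y := fun y => ker_integral_pos hσ ν y
  have ha_le : ∀ y, a y ≤ 1 := fun y => ker_integral_le_one hσ μ y
  have hb_le : ∀ y, b y ≤ 1 := fun y => ker_integral_le_one hσ ν y
  -- lower bound on X
  have hker_lb : ∀ y ∈ X, ∀ x ∈ X, c₀ ≤ ker σ x y := by
    intro y hy x hx
    rw [hc0_def, _root_.ker, Real.exp_le_exp]
    have hxy : ‖x - y‖ ≤ 2 * R := by
      have h1 : ‖x‖ ≤ R := by simpa [Metric.mem_closedBall, dist_zero_right] using hXR hx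
      have h2 : ‖y‖ ≤ R := by simpa [Metric.mem_closedBall, dist_zero_right] using hXR hy
      calc ‖x - y‖ ≤ ‖x‖ + ‖y‖ := norm_sub_le x y
        _ ≤ 2 * R := by linarith
    have hsq : ‖x - y‖ ^ 2 ≤ (2 * R) ^ 2 := by
      apply sq_le_sq' _ hxy
      nlinarith [norm_nonneg (x - y)]
    have h2σ : (0:ℝ) < 2 * σ ^ 2 := by positivity
    rw [div_le_div_iff_of_pos_right h2σ]
    linarith
  have hint_lb : ∀ (m : Measure (Pt d)) [IsProbabilityMeasure m], m Xᶜ = 0 →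
      ∀ y ∈ X, c₀ ≤ ∫ x, ker σ x y ∂m := by
    intro m _ hmX y hy
    have haeX : ∀ᵐ x ∂m, x ∈ X := by
      rw [ae_iff]
      exact hmX
    calc c₀ = ∫ _, c₀ ∂m := by simp
      _ ≤ ∫ x, ker σ x y ∂m := by
          apply integral_mono_ae (integrable_const c₀) (ker_integrable hσ m y)
          filter_upwards [haeX] with x hx
          exact hker_lb y hy x hx
  have ha_lb : ∀ y ∈ X, c₀ ≤ a y := hint_lb μ hμX
  have hb_lb : ∀ y ∈ X, c₀ ≤ b y := hint_lb ν hνX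
  have hc_abs : ∀ y, |b y - a y| ≤ 1 := by
    intro y
    rw [abs_sub_le_iff]
    constructor <;> [linarith [hb_le y, ha_pos y]; linarith [ha_le y, hb_pos y]]
  -- a.e. membership in X
  have haeX : ∀ᵐ y ∂μhat, y ∈ X := by
    rw [ae_iff]; exact hμhatX
  -- the parametrized family
  set F : ℝ → Pt d → ℝ := fun ε y => -Real.log (a y + ε * (b y - a y)) with hF_def
  set F' : ℝ → Pt d → ℝ := fun ε y => -((b y - a y) / (a y + ε * (b y - a y))) with hF'_def
  set δ : ℝ := c₀ / 2 with hδ_def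
  have hδ : 0 < δ := by positivity
  have hdenom : ∀ y ∈ X, ∀ ε ∈ Metric.ball (0:ℝ) δ, c₀ / 2 ≤ a y + ε * (b y - a y) := by
    intro y hy ε hε
    simp only [Metric.mem_ball, dist_zero_right, Real.norm_eq_abs] at hε
    have h1 : |ε * (b y - a y)| ≤ c₀ / 2 := by
      rw [abs_mul]
      calc |ε| * |b y - a y| ≤ (c₀/2) * 1 := by
            apply mul_le_mul hε.le (hc_abs y) (abs_nonneg _) (by positivity)
        _ = c₀ / 2 := mul_one _
    have h2 := ha_lb y hy
    have h3 := neg_abs_le (ε * (b y - a y))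
    linarith
  have hF_meas : ∀ ε : ℝ, AEStronglyMeasurable (F ε) μhat := by
    intro ε
    apply Measurable.aestronglyMeasurable
    exact (Real.measurable_log.comp
      ((hacont.add (continuous_const.mul (hbcont.sub hacont))).measurable)).neg
  have hF'_meas : ∀ ε : ℝ, AEStronglyMeasurable (F' ε) μhat := by
    intro ε
    apply Measurable.aestronglyMeasurable
    exact (((hbcont.sub hacont).measurable).div
      ((hacont.add (continuous_const.mul (hbcont.sub hacont))).measurable)).neg
  have hF_int : Integrable (F 0) μhat := by
    refine Integrable.mono' (integrable_const (-Real.log c₀)) (hF_meas 0) ?_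
    filter_upwards [haeX] with y hy
    simp only [hF_def, zero_mul, add_zero, norm_neg, Real.norm_eq_abs]
    rw [abs_of_nonpos (Real.log_nonpos (ha_pos y).le (ha_le y))]
    exact neg_le_neg (Real.log_le_log hc0 (ha_lb y hy))
  have h_bound : ∀ᵐ y ∂μhat, ∀ ε ∈ Metric.ball (0:ℝ) δ, ‖F' ε y‖ ≤ 2 / c₀ := by
    filter_upwards [haeX] with y hy ε hε
    have hd := hdenom y hy ε hε
    have hdpos : 0 < a y + ε * (b y - a y) := lt_of_lt_of_le (by positivity) hd
    simp only [hF'_def, norm_neg, Real.norm_eq_abs, abs_div, abs_of_pos hdpos]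
    calc |b y - a y| / (a y + ε * (b y - a y)) ≤ 1 / (c₀ / 2) := by
          apply div_le_div₀ (by norm_num) (hc_abs y) (by positivity) hd
      _ = 2 / c₀ := by field_simp
  have h_diff : ∀ᵐ y ∂μhat, ∀ ε ∈ Metric.ball (0:ℝ) δ,
      HasDerivAt (fun ε => F ε y) (F' ε y) ε := by
    filter_upwards [haeX] with y hy ε hε
    have hd := hdenom y hy ε hε
    have hdpos : 0 < a y + ε * (b y - a y) := lt_of_lt_of_le (by positivity) hd
    have h1 : HasDerivAt (fun t : ℝ => a y + t * (b y - a y)) (b y - a y) ε := by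
      simpa using ((hasDerivAt_id ε).mul_const (b y - a y)).const_add (a y)
    exact (h1.log hdpos.ne').neg
  obtain ⟨hF'_int, hderiv⟩ := hasDerivAt_integral_of_dominated_loc_of_deriv_le (Metric.ball_mem_nhds 0 hδ)
    (Filter.Eventually.of_forall hF_meas) hF_int (hF'_meas 0) h_bound
    (integrable_const (2 / c₀)) h_diff
  -- `g` is the integral function
  set g : ℝ → ℝ := fun ε => ∫ y, F ε y ∂μhat with hg_def
  -- identify the limit value
  have hswap : ∀ (m : Measure (Pt d)) [IsProbabilityMeasure m], m Xᶜ = 0 →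
      ∫ x, V x ∂m = -∫ y, (∫ x, ker σ x y ∂m) / a y ∂μhat := by
    intro m _ hmX
    have hker_meas : Measurable fun p : Pt d × Pt d => ker σ p.1 p.2 / a p.2 :=
      (ker_continuous σ).measurable.div (hacont.measurable.comp measurable_snd)
    have hprodX : (m.prod μhat) {p : Pt d × Pt d | p.2 ∉ X} = 0 := by
      have : {p : Pt d × Pt d | p.2 ∉ X} = (univ : Set (Pt d)) ×ˢ Xᶜ := by
        ext p; simp
      rw [this, Measure.prod_prod, hμhatX, mul_zero]
    have haeX2 : ∀ᵐ p ∂(m.prod μhat), p.2 ∈ X := by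
      rw [ae_iff]; exact hprodX
    have hintf : Integrable (Function.uncurry fun x y => ker σ x y / a y) (m.prod μhat) := by
      refine Integrable.mono' (integrable_const (1 / c₀)) hker_meas.aestronglyMeasurable ?_
      filter_upwards [haeX2] with p hp
      have hap : c₀ ≤ a p.2 := ha_lb p.2 hp
      simp only [Function.uncurry]
      rw [Real.norm_eq_abs, abs_div, abs_of_pos (ker_pos σ p.1 p.2),
        abs_of_pos (ha_pos p.2)]
      exact div_le_div₀ (by norm_num) (ker_le_one hσ p.1 p.2) hc0 hap
    have hs := integral_integral_swap hintf
    calc ∫ x, V x ∂m = ∫ x, -∫ y, ker σ x y / a y ∂μhat ∂m := by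
          apply integral_congr_ae
          filter_upwards with x
          rw [hV x]
      _ = -∫ x, ∫ y, ker σ x y / a y ∂μhat ∂m := integral_neg _
      _ = -∫ y, ∫ x, ker σ x y / a y ∂m ∂μhat := by rw [hs]
      _ = -∫ y, (∫ x, ker σ x y ∂m) / a y ∂μhat := by
          congr 1
          apply integral_congr_ae
          filter_upwards with y
          rw [integral_div]
  have hVμ : ∫ x, V x ∂μ = -1 := by
    rw [hswap μ hμX]
    have : ∀ y, (∫ x, ker σ x y ∂μ) / a y = 1 := fun y => div_self (ha_pos y).ne'
    simp only [this]
    simp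
  have h_ba_int : Integrable (fun y => b y / a y) μhat := by
    refine Integrable.mono' (integrable_const (1 / c₀)) ?_ ?_
    · exact (hbcont.measurable.div hacont.measurable).aestronglyMeasurable
    · filter_upwards [haeX] with y hy
      rw [Real.norm_eq_abs, abs_div, abs_of_pos (hb_pos y), abs_of_pos (ha_pos y)]
      exact div_le_div₀ (by norm_num) (hb_le y) hc0 (ha_lb y hy)
  have hVν : ∫ x, V x ∂ν = -∫ y, b y / a y ∂μhat := hswap ν hνX
  have hlimit : ∫ y, F' 0 y ∂μhat = ∫ x, V x ∂ν - ∫ x, V x ∂μ := by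
    rw [hVμ, hVν]
    have h1 : ∀ y, F' 0 y = 1 - b y / a y := by
      intro y
      simp only [hF'_def, zero_mul, add_zero, neg_div, neg_neg, sub_div,
        div_self (ha_pos y).ne']
      ring
    simp only [h1]
    rw [integral_sub (integrable_const 1) h_ba_int]
    simp only [integral_const, measure_univ, probReal_univ, ENNReal.toReal_one, smul_eq_mul, one_mul]
    ring
  -- eventual equality of difference quotients
  have hslope : Tendsto (slope g 0) (nhdsWithin 0 (Ioi 0)) (nhds (∫ y, F' 0 y ∂μhat)) := by
    have h := (hderiv.hasDerivWithinAt (s := Ioi 0))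
    rw [hasDerivWithinAt_iff_tendsto_slope] at h
    rwa [Set.diff_singleton_eq_self (by simp : (0:ℝ) ∉ Ioi 0)] at h
  rw [hlimit] at hslope
  apply hslope.congr'
  have h01 : ∀ᶠ ε in nhdsWithin (0:ℝ) (Ioi 0), ε ∈ Ioi (0:ℝ) ∧ ε < 1 := by
    filter_upwards [eventually_mem_nhdsWithin,
      eventually_nhdsWithin_of_eventually_nhds (eventually_lt_nhds (by norm_num : (0:ℝ) < 1))]
      with ε h1 h2
    exact ⟨h1, h2⟩
  filter_upwards [h01] with ε ⟨hε0, hε1⟩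
  have hε0' : 0 < ε := hε0
  -- identify Fitf with g
  have hFit0 : Fitf σ μ μhat = g 0 := by
    simp only [Fitf, hg_def, hF_def, zero_mul, add_zero, ha_def, _root_.ker]
  have hFitε : Fitf σ (ENNReal.ofReal (1 - ε) • μ + ENNReal.ofReal ε • ν) μhat = g ε := by
    simp only [Fitf, hg_def, hF_def]
    apply integral_congr_ae
    filter_upwards with y
    congr 1
    have hi1 : Integrable (fun x => Real.exp (-‖x - y‖ ^ 2 / (2 * σ ^ 2)))
        (ENNReal.ofReal (1 - ε) • μ) :=
      (ker_integrable hσ μ y).smul_measure ENNReal.ofReal_ne_top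
    have hi2 : Integrable (fun x => Real.exp (-‖x - y‖ ^ 2 / (2 * σ ^ 2)))
        (ENNReal.ofReal ε • ν) :=
      (ker_integrable hσ ν y).smul_measure ENNReal.ofReal_ne_top
    rw [integral_add_measure hi1 hi2, integral_smul_measure, integral_smul_measure,
      ENNReal.toReal_ofReal (by linarith), ENNReal.toReal_ofReal hε0'.le]
    have h1 : (∫ x, Real.exp (-‖x - y‖ ^ 2 / (2 * σ ^ 2)) ∂μ) = a y := rfl
    have h2 : (∫ x, Real.exp (-‖x - y‖ ^ 2 / (2 * σ ^ 2)) ∂ν) = b y := rfl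
    rw [h1, h2]
    simp only [smul_eq_mul]
    ring
  rw [slope_def_field, hFit0, hFitε, sub_zero]
end

section
/- Let X have positive Lebesgue measure, let λ_X be Lebesgue measure restricted to X and V := λ_X(X) ∈ (0,∞). Let p : X×X → (0,∞) be continuous. Let μ, ν ∈ P(X) be absolutely continuous with respect to λ_X with densities ρ_μ, ρ_ν satisfying ∫ |log ρ_μ| dμ < ∞ and ∫ |log ρ_ν| dν < ∞, and let γ ∈ Π(μ,ν). Then, with values in (−∞,+∞], H(γ | V^{−1} p·(λ_X ⊗ λ_X)) = log V + H(γ | p·(μ⊗ν)) + ∫ log ρ_μ dμ + ∫ log ρ_ν dν, where p·m denotes the measure with density p with respect to m; in particular the left-hand side is +∞ exactly when H(γ | p·(μ⊗ν)) = +∞. -/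
open MeasureTheory Real Set

/-! If `ρ' = g·ρ` with `g` finite and `γ`-a.e. positive, then `dγ/dρ = g · dγ/dρ'` γ-a.e., so
`H(γ|ρ) = H(γ|ρ') + ∫ log g dγ`, both sides being `+∞` together. For the coupling `γ` one has
`p·(μ⊗ν) = g · V⁻¹ p·(λ_X ⊗ λ_X)` with `g(x, y) = V ρ_μ(x) ρ_ν(y)`, and the marginals of `γ`
turn `∫ log g dγ` into `log V + ∫ log ρ_μ dμ + ∫ log ρ_ν dν`. -/

open scoped ENNReal

section ChangeOfReference

variable {α : Type*} [MeasurableSpace α]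

lemma sigmaFinite_smul_of_ne_top {μ : Measure α} [SigmaFinite μ] {c : ℝ≥0∞} (hc : c ≠ ∞) :
    SigmaFinite (c • μ) := by
  lift c to NNReal using hc
  rw [← ENNReal.smul_def]
  infer_instance

lemma ae_pos_withDensity_ofReal (ρ : Measure α) {f : α → ℝ} (hf : Measurable f) :
    ∀ᵐ x ∂ρ.withDensity (fun x => ENNReal.ofReal (f x)), 0 < f x :=
  (ae_withDensity_iff hf.ennreal_ofReal).2
    (ae_of_all _ fun _ => ENNReal.ofReal_pos.1 ∘ pos_iff_ne_zero.2)

lemma withDensity_withDensity_eq_inv_smul (m : Measure α) {r h : α → ℝ≥0∞} (hr : Measurable r)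
    (hh : Measurable h) {c : ℝ≥0∞} (hc0 : c ≠ 0) (hc : c ≠ ∞) :
    (m.withDensity r).withDensity h = (c⁻¹ • m.withDensity h).withDensity (fun x => c * r x) := by
  have hhr : h * (fun x => c * r x) = c • (r * h) := by
    ext x
    simp only [Pi.mul_apply, Pi.smul_apply, smul_eq_mul]
    ring
  rw [← withDensity_mul _ hr hh, withDensity_smul_measure, ← withDensity_mul _ hh (by fun_prop),
    hhr, withDensity_smul' _ _ hc, smul_smul, ENNReal.inv_mul_cancel hc0 hc, one_smul]

lemma absolutelyContinuous_withDensity_of_ae_ne_zero {γ ρ : Measure α} {g : α → ℝ≥0∞}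
    (hg : Measurable g) (hγρ : γ ≪ ρ) (hg0 : ∀ᵐ x ∂γ, g x ≠ 0) : γ ≪ ρ.withDensity g := by
  have hs : MeasurableSet {x | g x ≠ 0} := (hg (measurableSet_singleton 0)).compl
  have hγ : γ ≪ ρ.restrict {x | g x ≠ 0} := by
    rw [← Measure.restrict_eq_self_of_ae_mem (s := {x | g x ≠ 0}) hg0]
    exact hγρ.restrict _
  have hρ : ρ.restrict {x | g x ≠ 0} ≪ (ρ.withDensity g).restrict {x | g x ≠ 0} := by
    rw [restrict_withDensity hs]
    exact withDensity_absolutelyContinuous' hg.aemeasurable (ae_restrict_mem hs)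
  exact hγ.trans (hρ.trans (Measure.absolutelyContinuous_of_le Measure.restrict_le_self))

lemma rnDeriv_ae_eq_rnDeriv_withDensity_mul {γ ρ : Measure α} [SigmaFinite γ] [SigmaFinite ρ]
    {g : α → ℝ≥0∞} (hg : Measurable g) (hg_top : ∀ x, g x ≠ ∞) (hγ : γ ≪ ρ.withDensity g) :
    γ.rnDeriv ρ =ᵐ[γ] fun x => γ.rnDeriv (ρ.withDensity g) x * g x := by
  have := SigmaFinite.withDensity_of_ne_top' (μ := ρ) hg_top
  have hγρ : γ ≪ ρ := hγ.trans (withDensity_absolutelyContinuous ρ g)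
  filter_upwards [hγρ.ae_le (Measure.rnDeriv_mul_rnDeriv hγ),
    hγρ.ae_le (Measure.rnDeriv_withDensity ρ hg)] with x hchain hdens
  rw [← hchain, Pi.mul_apply, hdens]

theorem relEnt_eq_relEnt_withDensity_add {γ ρ : Measure α} [SigmaFinite γ] [SigmaFinite ρ]
    {g : α → ℝ≥0∞} (hg : Measurable g) (hg_top : ∀ x, g x ≠ ∞) (hg0 : ∀ᵐ x ∂γ, g x ≠ 0)
    (hlog : Integrable (fun x => log (g x).toReal) γ) :
    relEnt γ ρ = relEnt γ (ρ.withDensity g) + ∫ x, log (g x).toReal ∂γ := by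
  set ρ' := ρ.withDensity g
  have hlog_eq (hγ : γ ≪ ρ') : (fun x => log (γ.rnDeriv ρ x).toReal)
      =ᵐ[γ] fun x => log (γ.rnDeriv ρ' x).toReal + log (g x).toReal := by
    have := SigmaFinite.withDensity_of_ne_top' (μ := ρ) hg_top
    filter_upwards [rnDeriv_ae_eq_rnDeriv_withDensity_mul hg hg_top hγ, Measure.rnDeriv_pos hγ,
      hγ.ae_le (Measure.rnDeriv_lt_top γ ρ'), hg0] with x hx hpos hlt hx0
    rw [hx, ENNReal.toReal_mul, log_mul (ENNReal.toReal_pos hpos.ne' hlt.ne).ne'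
      (ENNReal.toReal_pos hx0 (hg_top x)).ne']
  have hcond : (γ ≪ ρ ∧ Integrable (fun x => log (γ.rnDeriv ρ x).toReal) γ) ↔
      (γ ≪ ρ' ∧ Integrable (fun x => log (γ.rnDeriv ρ' x).toReal) γ) := by
    refine ⟨fun ⟨hγρ, hint⟩ => ?_, fun ⟨hγ, hint⟩ => ?_⟩
    · have hγ := absolutelyContinuous_withDensity_of_ae_ne_zero hg hγρ hg0
      exact ⟨hγ, (hint.sub hlog).congr ((hlog_eq hγ).mono fun x hx => by simp [hx])⟩
    · exact ⟨hγ.trans (withDensity_absolutelyContinuous ρ g),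
        (hint.add hlog).congr (hlog_eq hγ).symm⟩
  by_cases h : γ ≪ ρ' ∧ Integrable (fun x => log (γ.rnDeriv ρ' x).toReal) γ
  · rw [relEnt, relEnt, if_pos (hcond.2 h), if_pos h, integral_congr_ae (hlog_eq h.1),
      integral_add h.2 hlog, EReal.coe_add]
  · rw [relEnt, relEnt, if_neg (mt hcond.1 h), if_neg h, EReal.top_add_coe]

end ChangeOfReference

section Coupling

variable {α β : Type*} [MeasurableSpace α] [MeasurableSpace β]
  {γ : Measure (α × β)} {f : α → ℝ} {g : β → ℝ}

lemma integrable_fst_add_snd (hf : Integrable f (γ.map Prod.fst))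
    (hg : Integrable g (γ.map Prod.snd)) : Integrable (fun q => f q.1 + g q.2) γ :=
  (hf.comp_measurable measurable_fst).add (hg.comp_measurable measurable_snd)

lemma integral_fst_add_snd (hf : Integrable f (γ.map Prod.fst))
    (hg : Integrable g (γ.map Prod.snd)) :
    ∫ q, f q.1 + g q.2 ∂γ = ∫ x, f x ∂(γ.map Prod.fst) + ∫ y, g y ∂(γ.map Prod.snd) := by
  have hf' : Integrable (fun q : α × β => f q.1) γ := hf.comp_measurable measurable_fst
  have hg' : Integrable (fun q : α × β => g q.2) γ := hg.comp_measurable measurable_snd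
  rw [integral_add hf' hg',
    integral_map measurable_fst.aemeasurable hf.aestronglyMeasurable,
    integral_map measurable_snd.aemeasurable hg.aestronglyMeasurable]

end Coupling

theorem stmt_17_general {d : ℕ} (X : Set (Pt d)) (hXc : IsCompact X)
    (hXpos : 0 < volume X)
    (V : ℝ) (hV : V = (volume X).toReal)
    (p : Pt d × Pt d → ℝ) (hp_cont : Continuous p)
    (μ ν : Measure (Pt d)) [IsProbabilityMeasure μ] [IsProbabilityMeasure ν]
    (ρμ ρν : Pt d → ℝ) (hρμm : Measurable ρμ) (hρνm : Measurable ρν)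
    (hμ : μ = (volume.restrict X).withDensity (fun x => ENNReal.ofReal (ρμ x)))
    (hν : ν = (volume.restrict X).withDensity (fun x => ENNReal.ofReal (ρν x)))
    (hμlog : Integrable (fun x => Real.log (ρμ x)) μ)
    (hνlog : Integrable (fun x => Real.log (ρν x)) ν)
    (γ : Measure (Pt d × Pt d)) [IsProbabilityMeasure γ]
    (hγ1 : γ.map Prod.fst = μ) (hγ2 : γ.map Prod.snd = ν) :
    relEnt γ
        ((ENNReal.ofReal V)⁻¹ •
          ((volume.restrict X).prod (volume.restrict X)).withDensity
            (fun q => ENNReal.ofReal (p q)))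
      = ((Real.log V : ℝ) : EReal)
        + relEnt γ ((μ.prod ν).withDensity (fun q => ENNReal.ofReal (p q)))
        + ((∫ x, Real.log (ρμ x) ∂μ : ℝ) : EReal)
        + ((∫ y, Real.log (ρν y) ∂ν : ℝ) : EReal) ∧
    (relEnt γ
        ((ENNReal.ofReal V)⁻¹ •
          ((volume.restrict X).prod (volume.restrict X)).withDensity
            (fun q => ENNReal.ofReal (p q))) = ⊤
      ↔ relEnt γ ((μ.prod ν).withDensity (fun q => ENNReal.ofReal (p q))) = ⊤) := by
  have hV0 : 0 < V := hV ▸ ENNReal.toReal_pos hXpos.ne' hXc.measure_lt_top.ne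
  have hVne : ENNReal.ofReal V ≠ 0 := (ENNReal.ofReal_pos.2 hV0).ne'
  set pp : Pt d × Pt d → ℝ≥0∞ := fun q => ENNReal.ofReal (p q)
  set ρ := (ENNReal.ofReal V)⁻¹ • ((volume.restrict X).prod (volume.restrict X)).withDensity pp
  set g : Pt d × Pt d → ℝ≥0∞ :=
    fun q => ENNReal.ofReal V * (ENNReal.ofReal (ρμ q.1) * ENNReal.ofReal (ρν q.2))
  have hρg : (μ.prod ν).withDensity pp = ρ.withDensity g := by
    rw [hμ, hν, prod_withDensity hρμm.ennreal_ofReal hρνm.ennreal_ofReal,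
      withDensity_withDensity_eq_inv_smul _ (by fun_prop) (by fun_prop) hVne ENNReal.ofReal_ne_top]
  have hpos : ∀ᵐ q ∂γ, 0 < ρμ q.1 ∧ 0 < ρν q.2 :=
    (ae_of_ae_map measurable_fst.aemeasurable
      (hγ1.trans hμ ▸ ae_pos_withDensity_ofReal _ hρμm)).and
    (ae_of_ae_map measurable_snd.aemeasurable
      (hγ2.trans hν ▸ ae_pos_withDensity_ofReal _ hρνm))
  have hlog_g : (fun q => log (g q).toReal)
      =ᵐ[γ] fun q => log V + (log (ρμ q.1) + log (ρν q.2)) := by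
    filter_upwards [hpos] with q ⟨h1, h2⟩
    simp only [g, ENNReal.toReal_mul, ENNReal.toReal_ofReal hV0.le, ENNReal.toReal_ofReal h1.le,
      ENNReal.toReal_ofReal h2.le]
    rw [log_mul hV0.ne' (by positivity), log_mul h1.ne' h2.ne']
  rw [← hγ1] at hμlog
  rw [← hγ2] at hνlog
  have hint := integrable_fst_add_snd hμlog hνlog
  have : SigmaFinite ρ := sigmaFinite_smul_of_ne_top (ENNReal.inv_ne_top.2 hVne)
  have hrel := relEnt_eq_relEnt_withDensity_add (ρ := ρ) (by fun_prop)
    (fun _ => by simp [g, ENNReal.mul_eq_top])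
    (hpos.mono fun q ⟨h1, h2⟩ => by simp [g, hV0, h1, h2])
    (((integrable_const _).add hint).congr hlog_g.symm)
  rw [← hρg, integral_congr_ae hlog_g, integral_add (integrable_const _) hint, integral_const,
    probReal_univ, one_smul, integral_fst_add_snd hμlog hνlog, hγ1, hγ2] at hrel
  rw [hrel]
  refine ⟨by push_cast; ac_rfl, ?_⟩
  generalize relEnt γ ((μ.prod ν).withDensity pp) = H
  induction H using EReal.rec <;> simp [← EReal.coe_add]

/-- change of reference measure for the relative entropy of a coupling:
`H(γ | V⁻¹ p·(λ_X ⊗ λ_X)) = log V + H(γ | p·(μ⊗ν)) + ∫ log ρ_μ dμ + ∫ log ρ_ν dν`, and the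
left-hand side is `+∞` exactly when `H(γ | p·(μ⊗ν)) = +∞`. -/
theorem stmt_17 {d : ℕ} (X : Set (Pt d)) (hXc : IsCompact X) (hXne : X.Nonempty)
    (hXpos : 0 < volume X)
    (V : ℝ) (hV : V = (volume X).toReal)
    (p : Pt d × Pt d → ℝ) (hp_cont : Continuous p) (hp_pos : ∀ q ∈ X ×ˢ X, 0 < p q)
    (μ ν : Measure (Pt d)) [IsProbabilityMeasure μ] [IsProbabilityMeasure ν]
    (ρμ ρν : Pt d → ℝ) (hρμm : Measurable ρμ) (hρνm : Measurable ρν)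
    (hρμ0 : ∀ x, 0 ≤ ρμ x) (hρν0 : ∀ x, 0 ≤ ρν x)
    (hμ : μ = (volume.restrict X).withDensity (fun x => ENNReal.ofReal (ρμ x)))
    (hν : ν = (volume.restrict X).withDensity (fun x => ENNReal.ofReal (ρν x)))
    (hμlog : Integrable (fun x => Real.log (ρμ x)) μ)
    (hνlog : Integrable (fun x => Real.log (ρν x)) ν)
    (γ : Measure (Pt d × Pt d)) [IsProbabilityMeasure γ]
    (hγ1 : γ.map Prod.fst = μ) (hγ2 : γ.map Prod.snd = ν) :
    relEnt γ
        ((ENNReal.ofReal V)⁻¹ •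
          ((volume.restrict X).prod (volume.restrict X)).withDensity
            (fun q => ENNReal.ofReal (p q)))
      = ((Real.log V : ℝ) : EReal)
        + relEnt γ ((μ.prod ν).withDensity (fun q => ENNReal.ofReal (p q)))
        + ((∫ x, Real.log (ρμ x) ∂μ : ℝ) : EReal)
        + ((∫ y, Real.log (ρν y) ∂ν : ℝ) : EReal) ∧
    (relEnt γ
        ((ENNReal.ofReal V)⁻¹ •
          ((volume.restrict X).prod (volume.restrict X)).withDensity
            (fun q => ENNReal.ofReal (p q))) = ⊤
      ↔ relEnt γ ((μ.prod ν).withDensity (fun q => ENNReal.ofReal (p q))) = ⊤) :=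
  stmt_17_general X hXc hXpos V hV p hp_cont μ ν ρμ ρν hρμm hρνm hμ hν hμlog hνlog γ hγ1 hγ2
end
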